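/- arXiv:2009.09880 — 6 statements merged into one kernel-verified Lean document; each statement's English description precedes it below -/
import Mathlib

section
/- Let M be skew-adjoint on a Hilbert space V generating the unitary group S(t) = e^{tM}, and let S_τ be the Cayley transform (I-(τ/2)M)^{-1}(I+(τ/2)M) with τ = T/N. Then for every v0 ∈ D(M) and every 1 ≤ n ≤ N, ||S(nτ)v0 - S_τ^n v0|| ≤ C τ^{1/2} ||v0||_{D(M)} with C independent of τ and n. -/
open scoped RealInnerProductSpace

private lemma trap_aux {g G : ℝ → ℝ} {f : ℝ → ℝ} {K a b : ℝ} (hab : a ≤ b) (hK : 0 ≤ K)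
    (hf : ∀ t, HasDerivAt f (-(g t)) t)
    (hg : ∀ t, HasDerivAt g (G t) t)
    (hG : ∀ t, |G t| ≤ K) :
    |f b - f a + ((b - a) / 2) * (g a + g b)| ≤ K * (b - a) ^ 2 := by
  have hgl : ∀ s t : ℝ, |g t - g s| ≤ K * |t - s| := by
    intro s t
    have := Convex.norm_image_sub_le_of_norm_hasDerivWithin_le
      (f := g) (f' := G) (s := Set.univ)
      (fun x _ => (hg x).hasDerivWithinAt)
      (fun x _ => by simpa [Real.norm_eq_abs] using hG x)
      convex_univ (Set.mem_univ s) (Set.mem_univ t)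
    simpa [Real.norm_eq_abs] using this
  set φ : ℝ → ℝ := fun t => f t - f a + ((t - a) / 2) * (g a + g t) with hφdef
  have hφ : ∀ t, HasDerivAt φ ((g a - g t) / 2 + ((t - a) / 2) * G t) t := by
    intro t
    have h1 : HasDerivAt (fun t : ℝ => f t - f a) (-(g t)) t := (hf t).sub_const _
    have h2 : HasDerivAt (fun t : ℝ => (t - a) / 2) (1 / 2) t := by
      simpa using ((hasDerivAt_id t).sub_const a).div_const 2
    have h3 : HasDerivAt (fun t : ℝ => g a + g t) (G t) t := (hg t).const_add _
    have h4 := h2.mul h3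
    have := h1.add h4
    exact this.congr_deriv (by ring)
  have hb : |φ b - φ a| ≤ (K * (b - a)) * |b - a| := by
    have := Convex.norm_image_sub_le_of_norm_hasDerivWithin_le
      (f := φ) (f' := fun t => (g a - g t) / 2 + ((t - a) / 2) * G t) (s := Set.Icc a b)
      (C := K * (b - a))
      (fun x _ => (hφ x).hasDerivWithinAt)
      (fun x hx => by
        have h1 : |g a - g x| ≤ K * (x - a) := by
          have := hgl x a
          have hxa : |a - x| = x - a := by
            rw [abs_of_nonpos] <;> [ring; linarith [hx.1]]
          calc |g a - g x| = |g a - g x| := rfl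
            _ ≤ K * (x - a) := by rw [← hxa]; exact this
        have h2 : |((x - a) / 2) * G x| ≤ ((x - a) / 2) * K := by
          rw [abs_mul]
          have : |(x - a) / 2| = (x - a) / 2 := abs_of_nonneg (by linarith [hx.1])
          rw [this]
          exact mul_le_mul_of_nonneg_left (hG x) (by linarith [hx.1])
        have := abs_add_le ((g a - g x) / 2) (((x - a) / 2) * G x)
        have h1' : |(g a - g x) / 2| ≤ K * (x - a) / 2 := by
          rw [abs_div]
          simp only [abs_two]
          linarith [h1]
        simp only [Real.norm_eq_abs]
        have hx2 : x ≤ b := hx.2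
        nlinarith [hx.1, hx.2, hK])
      (convex_Icc a b) (Set.left_mem_Icc.mpr hab) (Set.right_mem_Icc.mpr hab)
    simpa [Real.norm_eq_abs] using this
  have hφa : φ a = 0 := by simp [hφdef]
  have hφb : φ b = f b - f a + ((b - a) / 2) * (g a + g b) := rfl
  rw [hφa, sub_zero] at hb
  rw [← hφb]
  calc |φ b| ≤ (K * (b - a)) * |b - a| := hb
    _ = K * (b - a) ^ 2 := by rw [abs_of_nonneg (by linarith)]; ring

set_option maxHeartbeats 1600000 in
/-- Let `M` be skew-adjoint (domain `D`) generating the unitary group `S t = e^{tM}`,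
and let `Sτ` be the Cayley transform `(I-(τ/2)M)⁻¹(I+(τ/2)M)` with `τ = T/N`.  Then
for every `v0 ∈ D(M)` and every `1 ≤ n ≤ N`,
`‖S(nτ) v0 - Sτ^n v0‖ ≤ C τ^{1/2} ‖v0‖_{D(M)}` with `C` independent of `τ` and `n`. -/
theorem stmt_3 {V : Type*} [NormedAddCommGroup V] [InnerProductSpace ℝ V]
    (D : Submodule ℝ V) (M : V →ₗ[ℝ] V)
    (hskew : ∀ v ∈ D, ∀ w ∈ D, ⟪M v, w⟫ = - ⟪v, M w⟫)
    (S : ℝ → V →ₗ[ℝ] V)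
    (hS0 : S 0 = LinearMap.id)
    (hSgrp : ∀ s t : ℝ, S (s + t) = (S s).comp (S t))
    (hSiso : ∀ t : ℝ, ∀ v : V, ‖S t v‖ = ‖v‖)
    (hSinv : ∀ t : ℝ, ∀ v ∈ D, S t v ∈ D)
    (hSgen : ∀ v ∈ D, ∀ t : ℝ, HasDerivAt (fun r : ℝ => S r v) (M (S t v)) t)
    (T : ℝ) (hT : 0 < T) :
    ∃ C > 0, ∀ N : ℕ, 0 < N → ∀ Sτ : V →ₗ[ℝ] V,
      (∀ v : V, ‖Sτ v‖ = ‖v‖) →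
      (∀ v ∈ D, Sτ v ∈ D ∧
        Sτ v - (T / N / 2) • M (Sτ v) = v + (T / N / 2) • M v ∧
        M (Sτ v) = Sτ (M v)) →
      ∀ n : ℕ, 1 ≤ n → n ≤ N → ∀ v0 ∈ D,
        ‖S (n * (T / N)) v0 - (Sτ ^ n) v0‖ ≤
          C * (T / N) ^ ((1 : ℝ) / 2) * (‖v0‖ + ‖M v0‖) := by
  -- the commutation of M with S t on D
  have hcomm : ∀ t : ℝ, ∀ v ∈ D, M (S t v) = S t (M v) := by
    intro t v hv
    set L : V →L[ℝ] V := (S t).mkContinuous 1 (fun v => by rw [hSiso]; simp) with hL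
    have h1 : HasDerivAt (fun r : ℝ => S (t + r) v) (M (S t v)) 0 := by
      have h := hSgen v hv t
      have h2 : HasDerivAt (fun r : ℝ => t + r) 1 0 := (hasDerivAt_id 0).const_add t
      have h' : HasDerivAt (fun r : ℝ => S r v) (M (S t v)) ((fun r : ℝ => t + r) 0) := by
        simpa using h
      have := HasDerivAt.scomp (0:ℝ) h' h2
      simpa [Function.comp_def] using this
    have h2 : HasDerivAt (fun r : ℝ => S (t + r) v) (S t (M v)) 0 := by
      have heq : (fun r : ℝ => S (t + r) v) = fun r : ℝ => L (S r v) := by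
        funext r; rw [hSgrp]; rfl
      rw [heq]
      have h0 : HasDerivAt (fun r : ℝ => S r v) (M v) 0 := by
        have := hSgen v hv 0
        simpa [hS0] using this
      have := L.hasFDerivAt.comp_hasDerivAt 0 h0
      exact this
    exact h1.unique h2
  refine ⟨2 * Real.sqrt T, mul_pos two_pos (Real.sqrt_pos.mpr hT), ?_⟩
  intro N hN Sτ hτiso hprop n hn1 hnN v0 hv0
  set τ : ℝ := T / N with hτdef
  have hNpos : (0:ℝ) < N := Nat.cast_pos.mpr hN
  have hτpos : 0 < τ := div_pos hT hNpos
  -- facts about powers of Sτ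
  have hpow : ∀ k : ℕ, (Sτ ^ k) v0 ∈ D ∧ M ((Sτ ^ k) v0) = (Sτ ^ k) (M v0) := by
    intro k
    induction k with
    | zero => exact ⟨by simpa using hv0, by simp⟩
    | succ k ih =>
      have hsk : (Sτ ^ (k+1)) v0 = Sτ ((Sτ ^ k) v0) := by
        rw [pow_succ']; rfl
      have h := hprop _ ih.1
      refine ⟨by rw [hsk]; exact h.1, ?_⟩
      rw [hsk, h.2.2, ih.2, pow_succ']; rfl
  have hpowiso : ∀ k : ℕ, ∀ x : V, ‖(Sτ ^ k) x‖ = ‖x‖ := by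
    intro k
    induction k with
    | zero => simp
    | succ k ih =>
      intro x
      have : (Sτ ^ (k+1)) x = Sτ ((Sτ ^ k) x) := by rw [pow_succ']; rfl
      rw [this, hτiso, ih]
  -- key one-step estimate
  have key : ∀ k : ℕ,
      ‖S (((k:ℝ)+1) * τ) v0 - (Sτ ^ (k+1)) v0‖ ^ 2 ≤
      ‖S ((k:ℝ) * τ) v0 - (Sτ ^ k) v0‖ ^ 2 + 4 * τ ^ 2 * ‖M v0‖ ^ 2 := by
    intro k
    set a : ℝ := (k:ℝ) * τ with ha
    set b : ℝ := ((k:ℝ)+1) * τ with hbdef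
    have hba : b = a + τ := by rw [ha, hbdef]; ring
    set p := (Sτ ^ k) v0 with hp
    set q := (Sτ ^ (k+1)) v0 with hq
    have hqp : q = Sτ p := by rw [hq, hp, pow_succ']; rfl
    have hpD : p ∈ D := (hpow k).1
    have hqD : q ∈ D := (hpow (k+1)).1
    have hxD : S a v0 ∈ D := hSinv a v0 hv0
    have hyD : S b v0 ∈ D := hSinv b v0 hv0
    set w := (S b v0 - q) + (S a v0 - p) with hw
    have hwD : w ∈ D := D.add_mem (D.sub_mem hyD hqD) (D.sub_mem hxD hpD)
    have hMp : M p = (Sτ ^ k) (M v0) := (hpow k).2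
    have hMq : M q = (Sτ ^ (k+1)) (M v0) := (hpow (k+1)).2
    have hMx : M (S a v0) = S a (M v0) := hcomm a v0 hv0
    have hMy : M (S b v0) = S b (M v0) := hcomm b v0 hv0
    have hMw : M w = (M (S b v0) - M q) + (M (S a v0) - M p) := by
      rw [hw]; simp [map_add, map_sub]
    have hMwnorm : ‖M w‖ ≤ 4 * ‖M v0‖ := by
      have h1 : ‖M (S b v0)‖ = ‖M v0‖ := by rw [hMy, hSiso]
      have h2 : ‖M (S a v0)‖ = ‖M v0‖ := by rw [hMx, hSiso]
      have h3 : ‖M q‖ = ‖M v0‖ := by rw [hMq, hpowiso]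
      have h4 : ‖M p‖ = ‖M v0‖ := by rw [hMp, hpowiso]
      calc ‖M w‖ ≤ ‖M (S b v0) - M q‖ + ‖M (S a v0) - M p‖ := by rw [hMw]; exact norm_add_le _ _
        _ ≤ (‖M (S b v0)‖ + ‖M q‖) + (‖M (S a v0)‖ + ‖M p‖) := by
            gcongr <;> exact norm_sub_le _ _
        _ = 4 * ‖M v0‖ := by rw [h1, h2, h3, h4]; ring
    -- step relation
    have hstep : q - p = (τ/2) • M q + (τ/2) • M p := by
      have h := (hprop p hpD).2.1
      rw [← hqp] at h
      have h3 : q = (p + (τ/2) • M p) + (τ/2) • M q := sub_eq_iff_eq_add.mp h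
      conv_lhs => rw [h3]
      abel
    -- skew facts
    have hax : ⟪S a v0, M w⟫ = -⟪M (S a v0), w⟫ := by
      have := hskew (S a v0) hxD w hwD; linarith
    have hbx : ⟪S b v0, M w⟫ = -⟪M (S b v0), w⟫ := by
      have := hskew (S b v0) hyD w hwD; linarith
    have hMww0 : ⟪M w, w⟫ = 0 := by
      have h := hskew w hwD w hwD
      have h2 : ⟪w, M w⟫ = ⟪M w, w⟫ := real_inner_comm _ _
      linarith
    have hsum : ⟪M (S b v0), w⟫ - ⟪M q, w⟫ + (⟪M (S a v0), w⟫ - ⟪M p, w⟫) = 0 := by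
      rw [← inner_sub_left, ← inner_sub_left, ← inner_add_left, ← hMw, hMww0]
    -- energy identity
    have e1 : ‖S b v0 - q‖^2 - ‖S a v0 - p‖^2 = ⟪(S b v0 - q) - (S a v0 - p), w⟫ := by
      rw [hw, inner_sub_left, inner_add_right, inner_add_right,
        real_inner_self_eq_norm_sq, real_inner_self_eq_norm_sq,
        real_inner_comm (S a v0 - p) (S b v0 - q)]
      ring
    have e2 : (S b v0 - q) - (S a v0 - p) = (S b v0 - S a v0) - ((τ/2) • M q + (τ/2) • M p) := by
      rw [← hstep]; abel
    have hexp : ⟪(S b v0 - S a v0) - ((τ/2) • M q + (τ/2) • M p), w⟫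
        = ⟪S b v0, w⟫ - ⟪S a v0, w⟫ - (τ/2) * ⟪M q, w⟫ - (τ/2) * ⟪M p, w⟫ := by
      rw [inner_sub_left, inner_sub_left, inner_add_left, real_inner_smul_left, real_inner_smul_left]
      ring
    have e3 : ‖S b v0 - q‖^2 - ‖S a v0 - p‖^2
        = ⟪S b v0, w⟫ - ⟪S a v0, w⟫
          + ((b - a) / 2) * (⟪S a v0, M w⟫ + ⟪S b v0, M w⟫) := by
      rw [e1, e2, hexp, hax, hbx]
      have hbminus : b - a = τ := by rw [hba]; ring
      linear_combination (τ/2) * hsum + ((⟪M (S a v0), w⟫ + ⟪M (S b v0), w⟫)/2) * hbminus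
    -- derivatives
    have hf : ∀ t : ℝ, HasDerivAt (fun t : ℝ => ⟪S t v0, w⟫) (-(⟪S t v0, M w⟫)) t := by
      intro t
      have h := (hSgen v0 hv0 t).inner ℝ (hasDerivAt_const t w)
      have hv : ⟪M (S t v0), w⟫ = -⟪S t v0, M w⟫ := hskew _ (hSinv t v0 hv0) _ hwD
      simpa [hv] using h
    have hg : ∀ t : ℝ, HasDerivAt (fun t : ℝ => ⟪S t v0, M w⟫) (⟪S t (M v0), M w⟫) t := by
      intro t
      have h := (hSgen v0 hv0 t).inner ℝ (hasDerivAt_const t (M w))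
      have hv : M (S t v0) = S t (M v0) := hcomm t v0 hv0
      simpa [hv] using h
    have hG : ∀ t : ℝ, |⟪S t (M v0), M w⟫| ≤ ‖M v0‖ * ‖M w‖ := by
      intro t
      calc |⟪S t (M v0), M w⟫| ≤ ‖S t (M v0)‖ * ‖M w‖ := abs_real_inner_le_norm _ _
        _ = ‖M v0‖ * ‖M w‖ := by rw [hSiso]
    have htrap := trap_aux (by linarith [hτpos.le, hba] : a ≤ b)
      (by positivity : (0:ℝ) ≤ ‖M v0‖ * ‖M w‖) hf hg hG
    have hle : ‖S b v0 - q‖^2 - ‖S a v0 - p‖^2 ≤ (‖M v0‖ * ‖M w‖) * (b - a)^2 := by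
      rw [e3]; exact le_of_abs_le htrap
    have hba2 : (b - a)^2 = τ^2 := by rw [hba]; ring
    rw [hba2] at hle
    have hK4 : (‖M v0‖ * ‖M w‖) * τ^2 ≤ 4 * τ^2 * ‖M v0‖^2 := by
      nlinarith [mul_le_mul_of_nonneg_left hMwnorm (mul_nonneg (norm_nonneg (M v0)) (sq_nonneg τ))]
    linarith
  -- induction
  have main : ∀ k : ℕ, ‖S ((k:ℝ) * τ) v0 - (Sτ ^ k) v0‖ ^ 2 ≤ k * (4 * τ ^ 2 * ‖M v0‖ ^ 2) := by
    intro k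
    induction k with
    | zero => simp [hS0]
    | succ k ih =>
      have h := key k
      have hc : ((k+1 : ℕ) : ℝ) = (k:ℝ) + 1 := by push_cast; ring
      rw [hc]
      nlinarith [h, ih]
  -- conclusion
  have hfin := main n
  have hnT : (n:ℝ) * τ ≤ T := by
    have h1 : (n:ℝ) ≤ N := Nat.cast_le.mpr hnN
    have h2 : (N:ℝ) * τ = T := by rw [hτdef]; field_simp
    nlinarith [hτpos.le]
  have hbound : ‖S ((n:ℝ) * τ) v0 - (Sτ ^ n) v0‖ ^ 2 ≤ 4 * T * τ * ‖M v0‖ ^ 2 := by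
    have h0 : (0:ℝ) ≤ 4 * τ * ‖M v0‖ ^ 2 := by positivity
    have h1 := mul_le_mul_of_nonneg_right hnT h0
    nlinarith [hfin]
  set A := Real.sqrt T with hA
  set B := Real.sqrt τ with hB
  have hA2 : A ^ 2 = T := Real.sq_sqrt hT.le
  have hB2 : B ^ 2 = τ := Real.sq_sqrt hτpos.le
  have hAnn : 0 ≤ A := Real.sqrt_nonneg T
  have hBnn : 0 ≤ B := Real.sqrt_nonneg τ
  have hnorm : ‖S ((n:ℝ) * τ) v0 - (Sτ ^ n) v0‖ ≤ 2 * A * B * ‖M v0‖ := by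
    have h4 : (2 * A * B * ‖M v0‖) ^ 2 = 4 * T * τ * ‖M v0‖ ^ 2 := by
      rw [← hA2, ← hB2]; ring
    have h5 := Real.sqrt_le_sqrt (hbound.trans_eq h4.symm)
    rwa [Real.sqrt_sq (norm_nonneg _), Real.sqrt_sq (by positivity)] at h5
  have hrpow : (T / (N:ℝ)) ^ ((1:ℝ)/2) = B := by
    rw [hB, hτdef, Real.sqrt_eq_rpow]
  calc ‖S ((n:ℝ) * τ) v0 - (Sτ ^ n) v0‖ ≤ 2 * A * B * ‖M v0‖ := hnorm
    _ ≤ 2 * A * B * (‖v0‖ + ‖M v0‖) := by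
        apply mul_le_mul_of_nonneg_left _ (by positivity)
        linarith [norm_nonneg v0]
    _ = 2 * A * ((T / (N:ℝ)) ^ ((1:ℝ)/2)) * (‖v0‖ + ‖M v0‖) := by rw [hrpow]
end

section
/- Let M be skew-adjoint on a Hilbert space V generating the unitary group S(t), and let S_τ be the Cayley transform with τ = T/N. Then for every v0 ∈ D(M²) and every 1 ≤ n ≤ N, ||S(nτ)v0 - S_τ^n v0|| ≤ C τ ||v0||_{D(M²)} with C depending only on T. -/
open scoped RealInnerProductSpace

/-- Let `M` be skew-adjoint (domain `D`) generating the unitary group `S t`, and let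
`Sτ` be the Cayley transform with `τ = T/N`.  Then for every `v0 ∈ D(M²)` and every
`1 ≤ n ≤ N`, `‖S(nτ) v0 - Sτ^n v0‖ ≤ C τ ‖v0‖_{D(M²)}` with `C` depending only on `T`
(in particular independent of `τ` and `n`), where `‖v‖_{D(M²)} = ‖v‖ + ‖Mv‖ + ‖M²v‖`. -/
theorem stmt_4 {V : Type*} [NormedAddCommGroup V] [InnerProductSpace ℝ V]
    (D : Submodule ℝ V) (M : V →ₗ[ℝ] V)
    (hskew : ∀ v ∈ D, ∀ w ∈ D, ⟪M v, w⟫ = - ⟪v, M w⟫)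
    (S : ℝ → V →ₗ[ℝ] V)
    (hS0 : S 0 = LinearMap.id)
    (hSgrp : ∀ s t : ℝ, S (s + t) = (S s).comp (S t))
    (hSiso : ∀ t : ℝ, ∀ v : V, ‖S t v‖ = ‖v‖)
    (hSinv : ∀ t : ℝ, ∀ v ∈ D, S t v ∈ D)
    (hSgen : ∀ v ∈ D, ∀ t : ℝ, HasDerivAt (fun r : ℝ => S r v) (M (S t v)) t)
    (T : ℝ) (hT : 0 < T) :
    ∃ C > 0, ∀ N : ℕ, 0 < N → ∀ Sτ : V →ₗ[ℝ] V,
      (∀ v : V, ‖Sτ v‖ = ‖v‖) →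
      (∀ v ∈ D, Sτ v ∈ D ∧
        Sτ v - (T / N / 2) • M (Sτ v) = v + (T / N / 2) • M v ∧
        M (Sτ v) = Sτ (M v)) →
      ∀ n : ℕ, 1 ≤ n → n ≤ N → ∀ v0, v0 ∈ D → M v0 ∈ D →
        ‖S (n * (T / N)) v0 - (Sτ ^ n) v0‖ ≤
          C * (T / N) * (‖v0‖ + ‖M v0‖ + ‖M (M v0)‖) := by
  refine ⟨T, hT, ?_⟩
  intro N hN Sτ hiso hSτ n hn1 hnN v0 hv0 hMv0
  have hNpos : (0:ℝ) < (N:ℝ) := by exact_mod_cast hN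
  set τ : ℝ := T / N with hτdef
  have hτpos : 0 < τ := div_pos hT hNpos
  -- commutation of M with the group
  have hcomm : ∀ v ∈ D, ∀ t : ℝ, M (S t v) = S t (M v) := by
    intro v hv t
    have hD0 : HasDerivAt (fun r : ℝ => S r v) (M v) 0 := by
      simpa [hS0] using hSgen v hv 0
    have hcont : Continuous (S t) := by
      have hl : LipschitzWith 1 (S t) := by
        apply LipschitzWith.of_dist_le_mul
        intro a b
        simp [dist_eq_norm, ← map_sub, hSiso]
      exact hl.continuous
    let L : V →L[ℝ] V := ⟨S t, hcont⟩
    have h1 : HasDerivAt (fun h : ℝ => S t (S h v)) (S t (M v)) 0 :=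
      L.hasFDerivAt.comp_hasDerivAt 0 hD0
    have h2 : HasDerivAt (fun h : ℝ => S (t + h) v) (M (S t v)) 0 := by
      have := (hSgen v hv (t + 0)).comp_const_add t 0
      simpa using this
    have heq : (fun h : ℝ => S (t + h) v) = fun h : ℝ => S t (S h v) := by
      funext h; rw [hSgrp]; rfl
    rw [heq] at h2
    exact h2.unique h1
  -- lower bound for the resolvent
  have hlow : ∀ x ∈ D, ∀ c : ℝ, ‖x‖ ≤ ‖x - c • M x‖ := by
    intro x hx c
    have hx0 : ⟪x, M x⟫ = 0 := by
      have h1 := hskew x hx x hx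
      have h2 : ⟪M x, x⟫ = ⟪x, M x⟫ := real_inner_comm _ _
      linarith [h1, h2]
    have hsq : ‖x‖ ^ 2 ≤ ‖x - c • M x‖ ^ 2 := by
      have hexp := norm_sub_sq_real x (c • M x)
      have hz : ⟪x, c • M x⟫ = 0 := by
        rw [real_inner_smul_right, hx0]; ring
      rw [hexp, hz]
      nlinarith [sq_nonneg ‖c • M x‖]
    nlinarith [norm_nonneg x, norm_nonneg (x - c • M x)]
  -- local (one-step) error estimate
  have hlocal : ∀ w, w ∈ D → M w ∈ D →
      ‖S τ w - Sτ w‖ ≤ τ ^ 2 * ‖M (M w)‖ := by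
    intro w hw hMw
    obtain ⟨hzD, hzeq, -⟩ := hSτ w hw
    -- bound ‖S s (M w) - M w‖ ≤ ‖M (M w)‖ * s on [0, τ]
    have hψ : ∀ s ∈ Set.Icc (0:ℝ) τ, ‖S s (M w) - M w‖ ≤ ‖M (M w)‖ * s := by
      have hmain := norm_image_sub_le_of_norm_deriv_le_segment'
        (f := fun s : ℝ => S s (M w)) (f' := fun s : ℝ => S s (M (M w)))
        (C := ‖M (M w)‖) (a := 0) (b := τ)
        (fun s _ => by
          have hd := hSgen (M w) hMw s
          rw [hcomm (M w) hMw s] at hd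
          exact hd.hasDerivWithinAt)
        (fun s _ => le_of_eq (hSiso s _))
      intro s hs
      have h := hmain s hs
      simpa [hS0] using h
    -- the defect function
    set φ : ℝ → V := fun s => S s w - w - (s / 2) • (S s (M w) + M w) with hφ
    have hφderiv : ∀ s : ℝ, HasDerivAt φ
        ((1 / 2 : ℝ) • (S s (M w) - M w) - (s / 2) • S s (M (M w))) s := by
      intro s
      have h1 : HasDerivAt (fun s : ℝ => S s w) (S s (M w)) s := by
        have hd := hSgen w hw s
        rwa [hcomm w hw s] at hd
      have h2 : HasDerivAt (fun s : ℝ => S s (M w) + M w) (S s (M (M w))) s := by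
        have hd := hSgen (M w) hMw s
        rw [hcomm (M w) hMw s] at hd
        simpa using hd.add_const (M w)
      have h3 : HasDerivAt (fun s : ℝ => s / 2) (1 / 2 : ℝ) s := by
        simpa using (hasDerivAt_id s).div_const 2
      have h4 := h3.smul h2
      have h5 := (h1.sub_const w).sub h4
      refine HasDerivAt.congr_deriv h5 ?_
      module
    have hbound : ∀ s ∈ Set.Ico (0:ℝ) τ,
        ‖(1 / 2 : ℝ) • (S s (M w) - M w) - (s / 2) • S s (M (M w))‖
          ≤ τ * ‖M (M w)‖ := by
      intro s hs
      have hs0 : 0 ≤ s := hs.1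
      have hsτ : s ≤ τ := le_of_lt hs.2
      have b1 : ‖S s (M w) - M w‖ ≤ ‖M (M w)‖ * s :=
        hψ s ⟨hs0, hsτ⟩
      have b2 : ‖S s (M (M w))‖ = ‖M (M w)‖ := hSiso _ _
      calc ‖(1 / 2 : ℝ) • (S s (M w) - M w) - (s / 2) • S s (M (M w))‖
          ≤ ‖(1 / 2 : ℝ) • (S s (M w) - M w)‖ + ‖(s / 2) • S s (M (M w))‖ :=
            norm_sub_le _ _
        _ = (1/2) * ‖S s (M w) - M w‖ + (s/2) * ‖M (M w)‖ := by
            rw [norm_smul, norm_smul, b2, Real.norm_eq_abs, Real.norm_eq_abs,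
              abs_of_nonneg (by norm_num : (0:ℝ) ≤ 1/2),
              abs_of_nonneg (by linarith : (0:ℝ) ≤ s/2)]
        _ ≤ (1/2) * (‖M (M w)‖ * s) + (s/2) * ‖M (M w)‖ := by
            nlinarith [norm_nonneg (M (M w))]
        _ ≤ τ * ‖M (M w)‖ := by nlinarith [norm_nonneg (M (M w))]
    have hφτ : ‖φ τ‖ ≤ τ ^ 2 * ‖M (M w)‖ := by
      have hmain := norm_image_sub_le_of_norm_deriv_le_segment'
        (f := φ)
        (f' := fun s => (1 / 2 : ℝ) • (S s (M w) - M w) - (s / 2) • S s (M (M w)))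
        (C := τ * ‖M (M w)‖) (a := 0) (b := τ)
        (fun s _ => (hφderiv s).hasDerivWithinAt) hbound
      have h := hmain τ ⟨le_of_lt hτpos, le_refl τ⟩
      have hφ0 : φ 0 = 0 := by simp [hφ, hS0]
      rw [hφ0, sub_zero] at h
      calc ‖φ τ‖ ≤ τ * ‖M (M w)‖ * (τ - 0) := h
        _ = τ ^ 2 * ‖M (M w)‖ := by ring
    -- relate the defect to the error
    have hd : S τ w - Sτ w - (τ / 2) • M (S τ w - Sτ w) = φ τ := by
      have hz2 : (τ / 2) • M (Sτ w) = Sτ w - w - (τ / 2) • M w := by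
        have h0 : Sτ w - (τ / 2) • M (Sτ w) - (w + (τ / 2) • M w) = 0 :=
          sub_eq_zero.mpr hzeq
        have h1 : (τ / 2) • M (Sτ w) - (Sτ w - w - (τ / 2) • M w)
            = -(Sτ w - (τ / 2) • M (Sτ w) - (w + (τ / 2) • M w)) := by abel
        rw [← sub_eq_zero, h1, h0, neg_zero]
      rw [map_sub, smul_sub, hcomm w hw τ, hφ]
      simp only []
      rw [hz2, smul_add]
      abel
    have herrD : S τ w - Sτ w ∈ D := Submodule.sub_mem D (hSinv τ w hw) hzD
    calc ‖S τ w - Sτ w‖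
        ≤ ‖S τ w - Sτ w - (τ / 2) • M (S τ w - Sτ w)‖ := hlow _ herrD _
      _ = ‖φ τ‖ := by rw [hd]
      _ ≤ τ ^ 2 * ‖M (M w)‖ := hφτ
  -- global error by induction
  have key : ∀ m : ℕ, ‖S (m * τ) v0 - (Sτ ^ m) v0‖ ≤ m * (τ ^ 2 * ‖M (M v0)‖) := by
    intro m
    induction m with
    | zero => simp [hS0]
    | succ m ih =>
      set A : V := S (m * τ) v0 with hA
      have hAD : A ∈ D := hSinv _ _ hv0
      have hMAD : M A ∈ D := by
        rw [hA, hcomm v0 hv0]; exact hSinv _ _ hMv0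
      have hMMA : ‖M (M A)‖ = ‖M (M v0)‖ := by
        rw [hA, hcomm v0 hv0, hcomm (M v0) hMv0, hSiso]
      have hsplit : S ((m + 1 : ℕ) * τ) v0 - (Sτ ^ (m + 1)) v0
          = (S τ A - Sτ A) + Sτ (A - (Sτ ^ m) v0) := by
        have h1 : ((m + 1 : ℕ) : ℝ) * τ = τ + m * τ := by push_cast; ring
        rw [h1, hSgrp, pow_succ']
        simp only [LinearMap.comp_apply, Module.End.mul_apply, map_sub, hA]
        abel
      rw [hsplit]
      calc ‖(S τ A - Sτ A) + Sτ (A - (Sτ ^ m) v0)‖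
          ≤ ‖S τ A - Sτ A‖ + ‖Sτ (A - (Sτ ^ m) v0)‖ := norm_add_le _ _
        _ ≤ τ ^ 2 * ‖M (M A)‖ + ‖A - (Sτ ^ m) v0‖ := by
            rw [hiso]
            exact add_le_add_left (hlocal A hAD hMAD) _
        _ ≤ τ ^ 2 * ‖M (M v0)‖ + m * (τ ^ 2 * ‖M (M v0)‖) := by
            rw [hMMA]
            exact add_le_add_right ih _
        _ = ((m + 1 : ℕ) : ℝ) * (τ ^ 2 * ‖M (M v0)‖) := by push_cast; ring
  -- conclude
  have hkey := key n
  have hnN' : (n : ℝ) ≤ (N : ℝ) := by exact_mod_cast hnN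
  have hNτ : (N : ℝ) * τ = T := by
    rw [hτdef]; field_simp
  have hstep : (n : ℝ) * τ ≤ T := by nlinarith
  have h1 : (n : ℝ) * (τ ^ 2 * ‖M (M v0)‖) ≤ T * τ * ‖M (M v0)‖ := by
    nlinarith [mul_le_mul_of_nonneg_right hstep
      (mul_nonneg hτpos.le (norm_nonneg (M (M v0))))]
  have h2 : T * τ * ‖M (M v0)‖ ≤ T * τ * (‖v0‖ + ‖M v0‖ + ‖M (M v0)‖) := by
    have : 0 ≤ T * τ := by positivity
    nlinarith [norm_nonneg v0, norm_nonneg (M v0)]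
  calc ‖S (n * (T / N)) v0 - (Sτ ^ n) v0‖
      = ‖S (n * τ) v0 - (Sτ ^ n) v0‖ := by rw [hτdef]
    _ ≤ n * (τ ^ 2 * ‖M (M v0)‖) := hkey
    _ ≤ T * τ * ‖M (M v0)‖ := h1
    _ ≤ T * (T / N) * (‖v0‖ + ‖M v0‖ + ‖M (M v0)‖) := by rw [← hτdef]; exact h2
end

section
/- Suppose Q commutes with M, and let S_τ and T_τ be the Cayley midpoint operators with τ = T/N. Then the covariance operator Q_{T;N} = τ Σ_{j=1}^N (S_τ^{N-j}T_τ) Q (S_τ^{N-j}T_τ)* of the discrete stochastic convolution equals T·T_τ Q T_τ*, and its square root range satisfies Q_{T;N}^{1/2}(V) = (T_τ Q^{1/2})(V) ⊆ Q^{1/2}(V). -/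
open scoped RealInnerProductSpace
open ContinuousLinearMap

section Helpers

variable {V : Type*} [NormedAddCommGroup V] [InnerProductSpace ℝ V] [CompleteSpace V]

lemma pos_cs (Q : V →L[ℝ] V) (hQ : Q.IsPositive) (u v : V) :
    ⟪Q u, v⟫ ^ 2 ≤ ⟪Q u, u⟫ * ⟪Q v, v⟫ := by
  have hsym : ∀ a b : V, ⟪Q a, b⟫ = ⟪Q b, a⟫ := by
    intro a b
    rw [← hQ.isSelfAdjoint.adjoint_eq, adjoint_inner_left, real_inner_comm, hQ.isSelfAdjoint.adjoint_eq]
  have key : ∀ t : ℝ, 0 ≤ ⟪Q v, v⟫ * (t * t) + (2 * ⟪Q u, v⟫) * t + ⟪Q u, u⟫ := by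
    intro t
    have h0 : (0:ℝ) ≤ ⟪Q (u + t • v), u + t • v⟫ := by
      have := hQ.inner_nonneg_left (u + t • v)
      simpa [reApplyInnerSelf] using this
    have hexp : ⟪Q (u + t • v), u + t • v⟫
        = ⟪Q v, v⟫ * (t * t) + (2 * ⟪Q u, v⟫) * t + ⟪Q u, u⟫ := by
      simp only [map_add, map_smul, inner_add_left, inner_add_right,
        real_inner_smul_left, real_inner_smul_right]
      rw [hsym v u]
      ring
    linarith [hexp ▸ h0]
  have hd := discrim_le_zero key
  simp only [discrim] at hd
  nlinarith [hd]

lemma comm_pos_inner_le (Q P : V →L[ℝ] V) (hQ : Q.IsPositive)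
    (hP : IsSelfAdjoint P) (hc : P * Q = Q * P) (x : V) :
    ⟪Q (P x), x⟫ ≤ ‖P‖ * ⟪Q x, x⟫ := by
  have hcomm : ∀ m : ℕ, (P ^ m) * Q = Q * (P ^ m) := by
    intro m
    exact ((Commute.symm (by exact hc : Commute P Q)).pow_right m).symm
  have hPm : ∀ m : ℕ, IsSelfAdjoint (P ^ m) := fun m => hP.pow m
  set s : ℕ → ℝ := fun n => ⟪Q ((P ^ n) x), x⟫ with hs
  set a : ℝ := ⟪Q x, x⟫ with ha
  have ha0 : 0 ≤ a := by
    have := hQ.inner_nonneg_left x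
    simpa [reApplyInnerSelf, ha] using this
  have hflip : ∀ m : ℕ, ⟪Q ((P ^ m) x), (P ^ m) x⟫ = s (2 * m) := by
    intro m
    have h1 : adjoint (P ^ m) (Q ((P ^ m) x)) = Q ((P ^ (2 * m)) x) := by
      rw [(hPm m).adjoint_eq]
      have h2 := congrArg (fun f => f ((P ^ m) x)) (hcomm m)
      simp only [mul_def, comp_apply] at h2
      rw [h2, two_mul, pow_add, mul_def, comp_apply]
    rw [← adjoint_inner_left, h1]
  have hdouble : ∀ m : ℕ, s m ^ 2 ≤ s (2 * m) * a := by
    intro m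
    have h1 := pos_cs Q hQ ((P ^ m) x) x
    rw [hflip m] at h1
    exact h1
  have hbound : ∀ m : ℕ, 0 < m → s m ≤ ‖Q‖ * ‖P‖ ^ m * ‖x‖ ^ 2 := by
    intro m hm
    have b1 : ‖Q ((P ^ m) x)‖ ≤ ‖Q‖ * (‖P‖ ^ m * ‖x‖) := by
      refine (Q.le_opNorm _).trans ?_
      have b2 : ‖(P ^ m) x‖ ≤ ‖P ^ m‖ * ‖x‖ := (P ^ m).le_opNorm x
      have b3 : ‖P ^ m‖ ≤ ‖P‖ ^ m := norm_pow_le' P hm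
      exact mul_le_mul_of_nonneg_left
        (b2.trans (mul_le_mul_of_nonneg_right b3 (norm_nonneg x))) (norm_nonneg Q)
    calc s m ≤ ‖Q ((P ^ m) x)‖ * ‖x‖ := real_inner_le_norm _ _
      _ ≤ (‖Q‖ * (‖P‖ ^ m * ‖x‖)) * ‖x‖ := by
          apply mul_le_mul_of_nonneg_right b1 (norm_nonneg x)
      _ = ‖Q‖ * ‖P‖ ^ m * ‖x‖ ^ 2 := by ring
  suffices h : s 1 ≤ ‖P‖ * a by simpa [hs] using h
  rcases le_or_gt (s 1) 0 with hs1 | hs1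
  · exact hs1.trans (by positivity)
  have ha' : 0 < a := by
    rcases ha0.lt_or_eq with h' | h'
    · exact h'
    · exfalso
      have h2 := hdouble 1
      rw [← h', mul_zero] at h2
      nlinarith
  have hPn : 0 < ‖P‖ := by
    rcases (norm_nonneg P).lt_or_eq with h' | h'
    · exact h'
    · exfalso
      have hP0 : P = 0 := by rwa [eq_comm, norm_eq_zero] at h'
      have : s 1 = 0 := by simp [hs, hP0]
      linarith
  by_contra hlt
  push_neg at hlt
  have key : ∀ n : ℕ, s 1 ^ (2 ^ n) * a ≤ s (2 ^ n) * a ^ (2 ^ n) := by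
    intro n
    induction n with
    | zero => simp
    | succ n ih =>
      have h1 : (s 1 ^ (2 ^ n) * a) ^ 2 ≤ (s (2 ^ n) * a ^ (2 ^ n)) ^ 2 :=
        pow_le_pow_left₀ (by positivity) ih 2
      have h2 : s (2 ^ n) ^ 2 ≤ s (2 ^ (n + 1)) * a := by
        have h3 := hdouble (2 ^ n)
        rwa [← pow_succ'] at h3
      have hgoal : s 1 ^ (2 ^ (n + 1)) * a * a ≤ s (2 ^ (n + 1)) * a ^ (2 ^ (n + 1)) * a :=
        calc s 1 ^ (2 ^ (n + 1)) * a * a = (s 1 ^ (2 ^ n) * a) ^ 2 := by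
              rw [pow_succ, pow_mul]; ring
          _ ≤ (s (2 ^ n) * a ^ (2 ^ n)) ^ 2 := h1
          _ = s (2 ^ n) ^ 2 * (a ^ (2 ^ n)) ^ 2 := by ring
          _ ≤ (s (2 ^ (n + 1)) * a) * (a ^ (2 ^ n)) ^ 2 :=
              mul_le_mul_of_nonneg_right h2 (by positivity)
          _ = s (2 ^ (n + 1)) * a ^ (2 ^ (n + 1)) * a := by
              rw [pow_succ, pow_mul]; ring
      exact le_of_mul_le_mul_right hgoal ha'
  set r : ℝ := s 1 / (‖P‖ * a) with hr_def
  have hb : 0 < ‖P‖ * a := mul_pos hPn ha'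
  have hr : 1 < r := (one_lt_div hb).2 hlt
  obtain ⟨n, hn⟩ := pow_unbounded_of_one_lt (‖Q‖ * ‖x‖ ^ 2 / a) hr
  have h1 : s 1 ^ (2 ^ n) * a ≤ ‖Q‖ * ‖x‖ ^ 2 * (‖P‖ * a) ^ (2 ^ n) := by
    have hb2 := hbound (2 ^ n) (Nat.two_pow_pos n)
    calc s 1 ^ (2 ^ n) * a ≤ s (2 ^ n) * a ^ (2 ^ n) := key n
      _ ≤ (‖Q‖ * ‖P‖ ^ (2 ^ n) * ‖x‖ ^ 2) * a ^ (2 ^ n) :=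
          mul_le_mul_of_nonneg_right hb2 (by positivity)
      _ = ‖Q‖ * ‖x‖ ^ 2 * (‖P‖ * a) ^ (2 ^ n) := by rw [mul_pow]; ring
  have h2 : r ^ (2 ^ n) ≤ ‖Q‖ * ‖x‖ ^ 2 / a := by
    rw [hr_def, div_pow, div_le_div_iff₀ (by positivity) ha']
    exact h1
  have h3 : r ^ n ≤ r ^ (2 ^ n) := pow_le_pow_right₀ hr.le (Nat.lt_two_pow_self (n := n)).le
  linarith

lemma range_subset_of_adjoint_dominated (A B : V →L[ℝ] V) (c : ℝ)
    (h : ∀ x, ‖adjoint A x‖ ≤ c * ‖adjoint B x‖) :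
    Set.range A ⊆ Set.range B := by
  rintro _ ⟨u, rfl⟩
  -- well-definedness
  have hwd : ∀ x x' : V, adjoint B x = adjoint B x' → adjoint A x = adjoint A x' := by
    intro x x' hxx'
    have h1 : adjoint B (x - x') = 0 := by rw [map_sub, hxx', sub_self]
    have h2 := h (x - x')
    rw [h1, norm_zero, mul_zero] at h2
    have h3 : adjoint A (x - x') = 0 := norm_le_zero_iff.mp h2
    rw [map_sub, sub_eq_zero] at h3
    exact h3
  set p : Submodule ℝ V := LinearMap.range (adjoint B : V →ₗ[ℝ] V) with hp
  have hmem : ∀ w : p, ∃ x, adjoint B x = (w : V) := fun w => w.2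
  choose g hg using hmem
  have hgwd : ∀ (x : V) (w : p) (hx : adjoint B x = (w : V)),
      adjoint A (g w) = adjoint A x := by
    intro x w hx
    exact hwd _ _ (by rw [hg w, hx])
  let f₀ : p →ₗ[ℝ] ℝ :=
    { toFun := fun w => ⟪u, adjoint A (g w)⟫
      map_add' := by
        intro w₁ w₂
        have e : adjoint A (g (w₁ + w₂)) = adjoint A (g w₁ + g w₂) := by
          apply hwd
          rw [map_add, hg, hg, hg]
          rfl
        simp only [e, map_add, inner_add_right]
      map_smul' := by
        intro t w
        have e : adjoint A (g (t • w)) = adjoint A (t • g w) := by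
          apply hwd
          rw [map_smul, hg, hg]
          rfl
        simp only [e, map_smul, inner_smul_right, RingHom.id_apply, smul_eq_mul] }
  have hf₀bound : ∀ w : p, ‖f₀ w‖ ≤ (|c| * ‖u‖) * ‖w‖ := by
    intro w
    have h1 : ‖f₀ w‖ ≤ ‖u‖ * ‖adjoint A (g w)‖ := by
      simpa [f₀] using abs_real_inner_le_norm u (adjoint A (g w))
    have h2 : ‖adjoint A (g w)‖ ≤ |c| * ‖(w : V)‖ := by
      refine (h (g w)).trans ?_
      rw [hg w]
      exact mul_le_mul_of_nonneg_right (le_abs_self c) (norm_nonneg _)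
    calc ‖f₀ w‖ ≤ ‖u‖ * (|c| * ‖(w : V)‖) :=
          h1.trans (mul_le_mul_of_nonneg_left h2 (norm_nonneg u))
      _ = (|c| * ‖u‖) * ‖w‖ := by rw [Submodule.norm_coe]; ring
  let f : p →L[ℝ] ℝ := f₀.mkContinuous (|c| * ‖u‖) hf₀bound
  obtain ⟨F, hF, -⟩ := exists_extension_norm_eq p f
  set v : V := (InnerProductSpace.toDual ℝ V).symm F with hv
  refine ⟨v, ?_⟩
  apply ext_inner_right ℝ
  intro x
  have e1 : ⟪B v, x⟫ = ⟪v, adjoint B x⟫ := (adjoint_inner_right B v x).symm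
  have e2 : ⟪v, adjoint B x⟫ = F (adjoint B x) := by
    rw [hv]; exact InnerProductSpace.toDual_symm_apply
  have hxmem : adjoint B x ∈ p := ⟨x, rfl⟩
  have e3 : F (adjoint B x) = f (⟨adjoint B x, hxmem⟩ : p) := hF ⟨adjoint B x, hxmem⟩
  have e4 : f (⟨adjoint B x, hxmem⟩ : p) = ⟪u, adjoint A x⟫ := by
    show ⟪u, adjoint A (g ⟨adjoint B x, hxmem⟩)⟫ = ⟪u, adjoint A x⟫
    rw [hgwd x ⟨adjoint B x, hxmem⟩ rfl]
  have e5 : ⟪u, adjoint A x⟫ = ⟪A u, x⟫ := adjoint_inner_right A u x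
  rw [e1, e2, e3, e4, e5]

end Helpers


set_option maxHeartbeats 1000000 in
/-- Suppose the covariance `Q` commutes with `M`, and let `Sτ` (unitary) and `Tτ`
(contraction) be the Cayley midpoint operators with `τ = T/N`, both commuting with
`Q` and with each other.  Then the covariance of the discrete stochastic convolution
`Q_{T;N} = τ ∑_{j=1}^N (Sτ^{N-j}Tτ) Q (Sτ^{N-j}Tτ)*` equals `T • (Tτ Q Tτ*)`, and its
square root has range `Q_{T;N}^{1/2}(V) = (Tτ Q^{1/2})(V) ⊆ Q^{1/2}(V)`: any positive
square roots `RT` of `Q_{T;N}` and `R` of `Q` satisfy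
`range RT = range (Tτ ∘ R) ⊆ range R`. -/
theorem stmt_9 {V : Type*} [NormedAddCommGroup V] [InnerProductSpace ℝ V]
    [CompleteSpace V]
    (Q Tτ Sτ : V →L[ℝ] V) (T τ : ℝ) (N : ℕ) (hN : 0 < N) (hT : 0 < T)
    (hτ : τ = T / N)
    (hQsa : IsSelfAdjoint Q)
    (hSτunit : Sτ ∘L adjoint Sτ = 1 ∧ adjoint Sτ ∘L Sτ = 1)
    (hTτcontr : ∀ v : V, ‖Tτ v‖ ≤ ‖v‖)
    (hcommQS : Q ∘L Sτ = Sτ ∘L Q)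
    (hcommQT : Q ∘L Tτ = Tτ ∘L Q)
    (hcommTS : Tτ ∘L Sτ = Sτ ∘L Tτ) :
    (τ • ∑ j ∈ Finset.Icc 1 N,
        (((Sτ ^ (N - j)) ∘L Tτ) ∘L Q ∘L adjoint ((Sτ ^ (N - j)) ∘L Tτ)))
      = T • (Tτ ∘L Q ∘L adjoint Tτ) ∧
    ∀ R RT : V →L[ℝ] V, R.IsPositive → RT.IsPositive → R ∘L R = Q →
      RT ∘L RT = T • (Tτ ∘L Q ∘L adjoint Tτ) →
      Set.range RT = Set.range (Tτ ∘L R) ∧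
        Set.range (Tτ ∘L R) ⊆ Set.range R := by
  obtain ⟨hU1, hU2⟩ := hSτunit
  have hU1' : Sτ * star Sτ = 1 := by rw [star_eq_adjoint]; exact hU1
  have hU2' : star Sτ * Sτ = 1 := by rw [star_eq_adjoint]; exact hU2
  have cQ : Commute Sτ Q := hcommQS.symm
  have cT : Commute Sτ Tτ := hcommTS.symm
  have cTstar : Commute Sτ (star Tτ) := by
    have h1 : star Sτ * star Tτ = star Tτ * star Sτ := by
      calc star Sτ * star Tτ = star (Tτ * Sτ) := (star_mul _ _).symm
        _ = star (Sτ * Tτ) := congrArg star hcommTS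
        _ = star Tτ * star Sτ := star_mul _ _
    have h2 := congrArg (fun z => Sτ * z * Sτ) h1.symm
    simp only [← mul_assoc] at h2
    rw [mul_assoc (Sτ * star Tτ), hU2', mul_one, hU1', one_mul] at h2
    exact h2
  constructor
  · -- Part 1
    have cS : Commute Sτ (star Sτ) := by
      unfold Commute SemiconjBy
      rw [hU1', hU2']
    have cX : Commute Sτ (Tτ * Q * star Tτ) := (cT.mul_right cQ).mul_right cTstar
    have hkey : ∀ k : ℕ, Sτ ^ k * (Tτ * Q * star Tτ) * star (Sτ ^ k)
        = Tτ * Q * star Tτ := by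
      intro k
      have c1 := (cX.pow_left k).eq
      have hsu : Sτ ^ k * star (Sτ ^ k) = 1 := by
        rw [star_pow, ← cS.mul_pow, hU1', one_pow]
      rw [c1, mul_assoc, hsu, mul_one]
    have hterm : ∀ j : ℕ, ((Sτ ^ (N - j)) ∘L Tτ) ∘L Q ∘L adjoint ((Sτ ^ (N - j)) ∘L Tτ)
        = Tτ ∘L Q ∘L adjoint Tτ := by
      intro j
      have h := hkey (N - j)
      simp only [← mul_def, ← star_eq_adjoint, star_mul, star_pow]
      simp only [star_pow, ← mul_assoc] at h ⊢
      exact h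
    rw [Finset.sum_congr rfl (fun j _ => hterm j), Finset.sum_const, Nat.card_Icc,
      Nat.add_sub_cancel, ← Nat.cast_smul_eq_nsmul ℝ, smul_smul, hτ,
      div_mul_cancel₀ T (Nat.cast_ne_zero.2 hN.ne')]
  · -- Part 2
    intro R RT hR hRT hR2 hRT2
    have hRsa : adjoint R = R := hR.isSelfAdjoint.adjoint_eq
    have hRTsa : adjoint RT = RT := hRT.isSelfAdjoint.adjoint_eq
    have hQRR : ∀ z : V, ⟪Q z, z⟫ = ‖R z‖ ^ 2 := by
      intro z
      have h := adjoint_inner_left R z (R z)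
      rw [hRsa] at h
      rw [← hR2, comp_apply, h, real_inner_self_eq_norm_sq]
    have hQpos : Q.IsPositive := by
      refine (isPositive_iff' Q).2 ⟨hQsa, fun x => ?_⟩
      simpa [reApplyInnerSelf, hQRR x] using sq_nonneg ‖R x‖
    have hAstar : adjoint (Tτ ∘L R) = R ∘L adjoint Tτ := by
      rw [adjoint_comp, hRsa]
    have hnorm1 : ∀ x : V, ‖RT x‖ ^ 2 = T * ‖adjoint (Tτ ∘L R) x‖ ^ 2 := by
      intro x
      have e1 : ⟪(RT ∘L RT) x, x⟫ = ‖RT x‖ ^ 2 := by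
        have h := adjoint_inner_left RT x (RT x)
        rw [hRTsa] at h
        rw [comp_apply, h, real_inner_self_eq_norm_sq]
      have e2 : ⟪(RT ∘L RT) x, x⟫ = T * ‖R (adjoint Tτ x)‖ ^ 2 := by
        rw [hRT2, smul_apply, real_inner_smul_left]
        congr 1
        rw [comp_apply, comp_apply, ← adjoint_inner_right Tτ (Q (adjoint Tτ x)) x]
        exact hQRR _
      rw [← e1, e2, hAstar, comp_apply]
    have hT0 : 0 < Real.sqrt T := Real.sqrt_pos.2 hT
    have hnorm1' : ∀ x : V, ‖RT x‖ = Real.sqrt T * ‖adjoint (Tτ ∘L R) x‖ := by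
      intro x
      have h := hnorm1 x
      have h2 : ‖RT x‖ = Real.sqrt (T * ‖adjoint (Tτ ∘L R) x‖ ^ 2) := by
        rw [← h, Real.sqrt_sq (norm_nonneg _)]
      rw [h2, Real.sqrt_mul hT.le, Real.sqrt_sq (norm_nonneg _)]
    have hsub1 : Set.range RT ⊆ Set.range (Tτ ∘L R) := by
      apply range_subset_of_adjoint_dominated RT (Tτ ∘L R) (Real.sqrt T)
      intro x
      rw [hRTsa]
      exact (hnorm1' x).le
    have hsub2 : Set.range (Tτ ∘L R) ⊆ Set.range RT := by
      apply range_subset_of_adjoint_dominated (Tτ ∘L R) RT (Real.sqrt T)⁻¹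
      intro x
      rw [hRTsa, hnorm1' x, ← mul_assoc, inv_mul_cancel₀ hT0.ne', one_mul]
    have hsub3 : Set.range (Tτ ∘L R) ⊆ Set.range R := by
      apply range_subset_of_adjoint_dominated (Tτ ∘L R) R 1
      intro x
      rw [one_mul, hRsa, hAstar, comp_apply]
      set P : V →L[ℝ] V := Tτ ∘L adjoint Tτ with hPdef
      have hQTstar : Q ∘L adjoint Tτ = adjoint Tτ ∘L Q := by
        have h := congrArg adjoint hcommQT
        rw [adjoint_comp, adjoint_comp, hQsa.adjoint_eq] at h
        exact h.symm
      have hPsa : IsSelfAdjoint P := by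
        rw [IsSelfAdjoint, star_eq_adjoint, hPdef, adjoint_comp, adjoint_adjoint]
      have hPQ : P * Q = Q * P := by
        have h1 : adjoint Tτ * Q = Q * adjoint Tτ := hQTstar.symm
        have h2 : Tτ * Q = Q * Tτ := hcommQT.symm
        calc Tτ * adjoint Tτ * Q = Tτ * (adjoint Tτ * Q) := mul_assoc _ _ _
          _ = Tτ * (Q * adjoint Tτ) := by rw [h1]
          _ = Tτ * Q * adjoint Tτ := (mul_assoc _ _ _).symm
          _ = Q * Tτ * adjoint Tτ := by rw [h2]
          _ = Q * (Tτ * adjoint Tτ) := mul_assoc _ _ _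
      have hkey := comm_pos_inner_le Q P hQpos hPsa hPQ x
      have hTn : ‖Tτ‖ ≤ 1 :=
        Tτ.opNorm_le_bound zero_le_one (fun v => by simpa using hTτcontr v)
      have hTn' : ‖adjoint Tτ‖ ≤ 1 := by
        have : ‖adjoint Tτ‖ = ‖Tτ‖ :=
          (adjoint : (V →L[ℝ] V) ≃ₗᵢ⋆[ℝ] (V →L[ℝ] V)).norm_map Tτ
        rw [this]; exact hTn
      have hPle : ‖P‖ ≤ 1 :=
        calc ‖P‖ ≤ ‖Tτ‖ * ‖adjoint Tτ‖ := opNorm_comp_le _ _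
          _ ≤ 1 * 1 := mul_le_mul hTn hTn' (norm_nonneg _) zero_le_one
          _ = 1 := one_mul 1
      have h1 : ‖R (adjoint Tτ x)‖ ^ 2 = ⟪Q (P x), x⟫ := by
        have h3 := congrArg (fun f : V →L[ℝ] V => f (adjoint Tτ x)) hcommQT
        simp only [comp_apply] at h3
        have hv : Q (P x) = Tτ (Q (adjoint Tτ x)) := by
          rw [hPdef, comp_apply]; exact h3
        rw [← hQRR (adjoint Tτ x), adjoint_inner_right Tτ (Q (adjoint Tτ x)) x, hv]
      have h2 : ⟪Q x, x⟫ = ‖R x‖ ^ 2 := hQRR x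
      have h3 : ‖R (adjoint Tτ x)‖ ^ 2 ≤ ‖R x‖ ^ 2 := by
        rw [h1]
        calc ⟪Q (P x), x⟫ ≤ ‖P‖ * ⟪Q x, x⟫ := hkey
          _ ≤ 1 * ⟪Q x, x⟫ :=
              mul_le_mul_of_nonneg_right hPle (by rw [h2]; positivity)
          _ = ‖R x‖ ^ 2 := by rw [one_mul, h2]
      calc ‖R (adjoint Tτ x)‖ = Real.sqrt (‖R (adjoint Tτ x)‖ ^ 2) :=
            (Real.sqrt_sq (norm_nonneg _)).symm
        _ ≤ Real.sqrt (‖R x‖ ^ 2) := Real.sqrt_le_sqrt h3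
        _ = ‖R x‖ := Real.sqrt_sq (norm_nonneg _)
    exact ⟨hsub1.antisymm hsub2, hsub3⟩
end

section
/- Let M_h be a dissipative linear operator on a finite-dimensional inner product space V_h, and consider the implicit midpoint iteration u^{n+1} = u^n + (τ/2)(M_h u^n + M_h u^{n+1}) - ξ^{n+1}, where ξ^{n+1} are V_h-valued, square-integrable, independent mean-zero increments with E||ξ^{n+1}||² ≤ τ·Tr(Q), and u^0 with E||u^0||² ≤ E||u_0||². Then max_{0≤n≤N} E||u^n||² ≤ 2E||u_0||² + 2T·Tr(Q) where T = Nτ. -/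
open scoped RealInnerProductSpace
open MeasureTheory

private lemma integrable_inner_of_memL2 {Vh : Type*} [NormedAddCommGroup Vh]
    [InnerProductSpace ℝ Vh] {Ω : Type*} [MeasurableSpace Ω] {P : Measure Ω}
    {f g : Ω → Vh} (hf : MemLp f 2 P) (hg : MemLp g 2 P) :
    Integrable (fun ω => ⟪f ω, g ω⟫) P := by
  have h := L2.integrable_inner (𝕜 := ℝ) (hf.toLp f) (hg.toLp g)
  refine h.congr ?_
  filter_upwards [hf.coeFn_toLp, hg.coeFn_toLp] with ω h1 h2
  rw [h1, h2]

/-- Moment bound for the implicit midpoint iteration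
`u^{n+1} = u^n + (τ/2)(Mh u^n + Mh u^{n+1}) - ξ^{n+1}` with `Mh` dissipative on a
finite-dimensional inner product space, square-integrable mean-zero increments
`ξ^{n+1}` that are mutually orthogonal and orthogonal to the initial value (in the
sense of vanishing mixed second moments under arbitrary linear images), and
`E‖ξ^{n+1}‖² ≤ τ Tr(Q)`.  Then `max_{0≤n≤N} E‖u^n‖² ≤ 2E‖u⁰‖² + 2T·Tr(Q)`, `T = Nτ`. -/
theorem stmt_12 {Vh : Type*} [NormedAddCommGroup Vh] [InnerProductSpace ℝ Vh]
    [FiniteDimensional ℝ Vh]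
    {Ω : Type*} [MeasurableSpace Ω] (P : Measure Ω) [IsProbabilityMeasure P]
    (Mh : Vh →ₗ[ℝ] Vh) (hdiss : ∀ v : Vh, ⟪Mh v, v⟫ ≤ 0)
    (τ : ℝ) (hτ : 0 < τ) (N : ℕ) (trQ : ℝ) (htrQ : 0 ≤ trQ)
    (u ξ : ℕ → Ω → Vh)
    (hrec : ∀ n < N, ∀ ω, u (n + 1) ω
        = u n ω + (τ / 2) • (Mh (u n ω) + Mh (u (n + 1) ω)) - ξ (n + 1) ω)
    (hξvar : ∀ n, 1 ≤ n → n ≤ N → ∫ ω, ‖ξ n ω‖ ^ 2 ∂P ≤ τ * trQ)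
    (hL2u : ∀ n ≤ N, MemLp (u n) 2 P)
    (hL2ξ : ∀ n ≤ N, MemLp (ξ n) 2 P)
    (horthoξξ : ∀ (A B : Vh →ₗ[ℝ] Vh), ∀ j k, 1 ≤ j → j ≤ N → 1 ≤ k → k ≤ N →
        j ≠ k → ∫ ω, ⟪A (ξ j ω), B (ξ k ω)⟫ ∂P = 0)
    (horthou0 : ∀ (A B : Vh →ₗ[ℝ] Vh), ∀ j, 1 ≤ j → j ≤ N →
        ∫ ω, ⟪A (u 0 ω), B (ξ j ω)⟫ ∂P = 0) :
    ∀ n ≤ N, ∫ ω, ‖u n ω‖ ^ 2 ∂P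
        ≤ 2 * (∫ ω, ‖u 0 ω‖ ^ 2 ∂P) + 2 * ((N : ℝ) * τ) * trQ := by
  classical
  -- The resolvent-type operator `f = I - (τ/2) Mh`
  set f : Vh →ₗ[ℝ] Vh := LinearMap.id - (τ / 2) • Mh with hf_def
  have hf_apply : ∀ w : Vh, f w = w - (τ / 2) • Mh w := by
    intro w; simp [hf_def, LinearMap.sub_apply]
  -- `f` expands norms
  have hfnorm : ∀ w : Vh, ‖w‖ ≤ ‖f w‖ := by
    intro w
    have hsq : ‖w‖ ^ 2 ≤ ‖f w‖ ^ 2 := by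
      rw [hf_apply, norm_sub_sq_real]
      have h1 : ⟪w, (τ / 2) • Mh w⟫ = (τ / 2) * ⟪Mh w, w⟫ := by
        rw [real_inner_smul_right, real_inner_comm]
      have h2 : (τ / 2) * ⟪Mh w, w⟫ ≤ 0 :=
        mul_nonpos_of_nonneg_of_nonpos (by linarith) (hdiss w)
      nlinarith [sq_nonneg ‖(τ / 2) • Mh w‖]
    have h := Real.sqrt_le_sqrt hsq
    rwa [Real.sqrt_sq (norm_nonneg _), Real.sqrt_sq (norm_nonneg _)] at h
  -- `f` is bijective
  have hinj : Function.Injective f := by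
    intro a b hab
    have h0 : f (a - b) = 0 := by rw [map_sub, hab, sub_self]
    have := hfnorm (a - b)
    rw [h0, norm_zero] at this
    have : a - b = 0 := norm_le_zero_iff.mp this
    exact sub_eq_zero.mp this
  have hsurj : Function.Surjective f := LinearMap.injective_iff_surjective.mp hinj
  let e : Vh ≃ₗ[ℝ] Vh := LinearEquiv.ofBijective f ⟨hinj, hsurj⟩
  let R : Vh →ₗ[ℝ] Vh := (e.symm : Vh →ₗ[ℝ] Vh)
  have hfR : ∀ v : Vh, f (R v) = v := fun v => e.apply_symm_apply v
  have hRf : ∀ w : Vh, R (f w) = w := fun w => e.symm_apply_apply w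
  have hRnorm : ∀ v : Vh, ‖R v‖ ≤ ‖v‖ := fun v => (hfnorm (R v)).trans_eq (by rw [hfR])
  -- transition operator
  let S : Vh →ₗ[ℝ] Vh := R ∘ₗ (LinearMap.id + (τ / 2) • Mh)
  -- integrability helpers
  have memL : ∀ (A : Vh →ₗ[ℝ] Vh) {h : Ω → Vh}, MemLp h 2 P →
      MemLp (fun ω => A (h ω)) 2 P := by
    intro A h hh
    exact (LinearMap.toContinuousLinearMap A).comp_memLp' hh
  have sqInt : ∀ {h : Ω → Vh}, MemLp h 2 P → Integrable (fun ω => ‖h ω‖ ^ 2) P := by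
    intro h hh
    have := integrable_inner_of_memL2 hh hh
    refine this.congr ?_
    filter_upwards with ω
    rw [real_inner_self_eq_norm_sq]
  -- main induction invariant
  have key : ∀ n, n ≤ N →
      (∫ ω, ‖u n ω‖ ^ 2 ∂P ≤ (∫ ω, ‖u 0 ω‖ ^ 2 ∂P) + n * (τ * trQ)) ∧
      (∀ A : Vh →ₗ[ℝ] Vh, ∀ j, n < j → j ≤ N →
        ∫ ω, ⟪A (u n ω), ξ j ω⟫ ∂P = 0) := by
    intro n
    induction n with
    | zero =>
      intro _
      constructor
      · simp
      · intro A j hj1 hj2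
        simpa using horthou0 A LinearMap.id j hj1 hj2
    | succ n ih =>
      intro hn1
      have hnN : n < N := hn1
      have hnle : n ≤ N := Nat.le_of_lt hnN
      obtain ⟨ihE, ihO⟩ := ih hnle
      -- pointwise representation u^{n+1} = S u^n - R ξ^{n+1}
      have hrep : ∀ ω, u (n + 1) ω = S (u n ω) - R (ξ (n + 1) ω) := by
        intro ω
        set a := u n ω with ha
        set b := u (n + 1) ω with hb
        set x := ξ (n + 1) ω with hx
        have hab : b = a + (τ / 2) • (Mh a + Mh b) - x := hrec n hnN ω
        have hfb : f b = a + (τ / 2) • Mh a - x := by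
          rw [hf_apply]
          rw [smul_add] at hab
          have h2 : (τ / 2) • Mh b = b - a + x - (τ / 2) • Mh a := by
            conv_rhs => rw [hab]
            abel
          rw [h2]; abel
        have : b = R (a + (τ / 2) • Mh a - x) := by
          rw [← hfb, hRf]
        rw [this]
        simp only [S, LinearMap.comp_apply, LinearMap.add_apply, LinearMap.id_apply,
          LinearMap.smul_apply, map_sub]
      -- pointwise energy inequality
      have hpt : ∀ ω, ‖u (n + 1) ω‖ ^ 2 ≤
          ‖u n ω‖ ^ 2 - 2 * ⟪R (u n ω), ξ (n + 1) ω⟫ + ‖ξ (n + 1) ω‖ ^ 2 := by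
        intro ω
        set a := u n ω with ha
        set b := u (n + 1) ω with hb
        set x := ξ (n + 1) ω with hx
        have hab : b = a + (τ / 2) • (Mh a + Mh b) - x := hrec n hnN ω
        have hd : b - a = (τ / 2) • (Mh a + Mh b) - x := by
          conv_lhs => rw [hab]
          abel
        -- a + b = R (a + a - x)
        have hfab : f (a + b) = a + a - x := by
          rw [hf_apply, map_add, smul_add]
          have h5 : (τ / 2) • Mh a + (τ / 2) • Mh b = b - a + x := by
            rw [hd, smul_add]; abel
          rw [h5]; abel
        have hsum : a + b = R a + R a - R x := by
          have : a + b = R (a + a - x) := by rw [← hfab, hRf]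
          rw [this, map_sub, map_add]
        -- energy identity
        have hinner : ⟪b - a, b + a⟫ = ‖b‖ ^ 2 - ‖a‖ ^ 2 := by
          rw [inner_sub_left, inner_add_right, inner_add_right,
            real_inner_self_eq_norm_sq, real_inner_self_eq_norm_sq,
            real_inner_comm a b]
          ring
        have hL : ⟪b - a, b + a⟫ = (τ / 2) * ⟪Mh (a + b), a + b⟫ - ⟪x, a + b⟫ := by
          rw [hd, map_add]
          rw [inner_sub_left, real_inner_smul_left, add_comm b a]
        have hdiss' : (τ / 2) * ⟪Mh (a + b), a + b⟫ ≤ 0 :=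
          mul_nonpos_of_nonneg_of_nonpos (by linarith) (hdiss _)
        have hxs : ⟪x, a + b⟫ = 2 * ⟪R a, x⟫ - ⟪x, R x⟫ := by
          rw [hsum, inner_sub_right, inner_add_right, real_inner_comm x (R a)]
          ring
        have hCS : ⟪x, R x⟫ ≤ ‖x‖ ^ 2 := by
          have h1 := real_inner_le_norm x (R x)
          have h2 := hRnorm x
          nlinarith [norm_nonneg x]
        nlinarith [hinner, hL, hdiss', hxs, hCS]
      -- Memℒp facts
      have hun : MemLp (u n) 2 P := hL2u n hnle
      have hun1 : MemLp (u (n + 1)) 2 P := hL2u (n + 1) hn1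
      have hxi : MemLp (ξ (n + 1)) 2 P := hL2ξ (n + 1) hn1
      constructor
      · -- energy bound
        have intLHS : Integrable (fun ω => ‖u (n + 1) ω‖ ^ 2) P := sqInt hun1
        have intA : Integrable (fun ω => ‖u n ω‖ ^ 2) P := sqInt hun
        have intB : Integrable (fun ω => ⟪R (u n ω), ξ (n + 1) ω⟫) P :=
          integrable_inner_of_memL2 (memL R hun) hxi
        have intC : Integrable (fun ω => ‖ξ (n + 1) ω‖ ^ 2) P := sqInt hxi
        have intB2 : Integrable (fun ω => 2 * ⟪R (u n ω), ξ (n + 1) ω⟫) P := by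
          exact intB.const_mul 2
        have intAB : Integrable
            (fun ω => ‖u n ω‖ ^ 2 - 2 * ⟪R (u n ω), ξ (n + 1) ω⟫) P := by
          exact intA.sub intB2
        have intRHS : Integrable (fun ω =>
            ‖u n ω‖ ^ 2 - 2 * ⟪R (u n ω), ξ (n + 1) ω⟫ + ‖ξ (n + 1) ω‖ ^ 2) P := by
          exact intAB.add intC
        have hmono : ∫ ω, ‖u (n + 1) ω‖ ^ 2 ∂P ≤
            ∫ ω, (‖u n ω‖ ^ 2 - 2 * ⟪R (u n ω), ξ (n + 1) ω⟫ + ‖ξ (n + 1) ω‖ ^ 2) ∂P :=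
          integral_mono intLHS intRHS (fun ω => hpt ω)
        have hsplit : ∫ ω, (‖u n ω‖ ^ 2 - 2 * ⟪R (u n ω), ξ (n + 1) ω⟫
              + ‖ξ (n + 1) ω‖ ^ 2) ∂P
            = (∫ ω, ‖u n ω‖ ^ 2 ∂P) - 2 * (∫ ω, ⟪R (u n ω), ξ (n + 1) ω⟫ ∂P)
              + ∫ ω, ‖ξ (n + 1) ω‖ ^ 2 ∂P := by
          rw [integral_add intAB intC, integral_sub intA intB2, integral_const_mul]
        have hzero : ∫ ω, ⟪R (u n ω), ξ (n + 1) ω⟫ ∂P = 0 :=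
          ihO R (n + 1) (Nat.lt_succ_self n) hn1
        have hvar : ∫ ω, ‖ξ (n + 1) ω‖ ^ 2 ∂P ≤ τ * trQ :=
          hξvar (n + 1) (Nat.le_add_left 1 n) hn1
        rw [hsplit, hzero] at hmono
        push_cast
        linarith [ihE]
      · -- orthogonality propagation
        intro A j hj1 hj2
        have hptO : ∀ ω, ⟪A (u (n + 1) ω), ξ j ω⟫
            = ⟪(A ∘ₗ S) (u n ω), ξ j ω⟫ - ⟪(A ∘ₗ R) (ξ (n + 1) ω), ξ j ω⟫ := by
          intro ω
          rw [hrep ω, map_sub, inner_sub_left]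
          rfl
        have int1 : Integrable (fun ω => ⟪(A ∘ₗ S) (u n ω), ξ j ω⟫) P :=
          integrable_inner_of_memL2 (memL (A ∘ₗ S) hun) (hL2ξ j hj2)
        have int2 : Integrable (fun ω => ⟪(A ∘ₗ R) (ξ (n + 1) ω), ξ j ω⟫) P :=
          integrable_inner_of_memL2 (memL (A ∘ₗ R) hxi) (hL2ξ j hj2)
        have h1 : ∫ ω, ⟪(A ∘ₗ S) (u n ω), ξ j ω⟫ ∂P = 0 :=
          ihO (A ∘ₗ S) j (Nat.lt_of_succ_lt hj1) hj2
        have h2 : ∫ ω, ⟪(A ∘ₗ R) (ξ (n + 1) ω), ξ j ω⟫ ∂P = 0 := by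
          have := horthoξξ (A ∘ₗ R) LinearMap.id (n + 1) j
            (Nat.le_add_left 1 n) hn1 (by omega) hj2 (by omega)
          simpa using this
        calc ∫ ω, ⟪A (u (n + 1) ω), ξ j ω⟫ ∂P
            = ∫ ω, (⟪(A ∘ₗ S) (u n ω), ξ j ω⟫ - ⟪(A ∘ₗ R) (ξ (n + 1) ω), ξ j ω⟫) ∂P := by
              exact integral_congr_ae (Filter.Eventually.of_forall hptO)
          _ = (∫ ω, ⟪(A ∘ₗ S) (u n ω), ξ j ω⟫ ∂P)
              - ∫ ω, ⟪(A ∘ₗ R) (ξ (n + 1) ω), ξ j ω⟫ ∂P := integral_sub int1 int2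
          _ = 0 := by rw [h1, h2, sub_zero]
  -- conclude
  intro n hn
  have h := (key n hn).1
  have hg0 : 0 ≤ ∫ ω, ‖u 0 ω‖ ^ 2 ∂P :=
    integral_nonneg (fun ω => sq_nonneg _)
  have hnN : (n : ℝ) ≤ (N : ℝ) := Nat.cast_le.mpr hn
  have hτtr : 0 ≤ τ * trQ := mul_nonneg hτ.le htrQ
  nlinarith [mul_le_mul_of_nonneg_right hnN hτtr]
end

section
/- Consider the implicit midpoint full discretization u_h^{n+1} = u_h^n + (τ/2)(M_h u_h^n + M_h u_h^{n+1}) - π_h ΔW^{n+1} with u_h^0 = π_h u_0. If u_0 ∈ V_0 (divergence-free initial data), Q^{1/2} ∈ HS(V, V_0), and the dG operator satisfies ⟨M_h w, (∇ψ, ∇φ)⟩_V = 0 for all w and all ψ, φ in the conforming test space X_h ⊂ H_0^1(D), then for all n and all φ ∈ X_h, ⟨∇·(ε E_h^n), φ⟩_{-1} = 0 and ⟨∇·(μ H_h^n), φ⟩_{-1} = 0 almost surely. -/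
open scoped RealInnerProductSpace

/-- Weak divergence preservation for the implicit midpoint full discretization
`u_h^{n+1} = u_h^n + (τ/2)(Mh u_h^n + Mh u_h^{n+1}) - πh ΔW^{n+1}`, `u_h^0 = πh u₀`.
Here `V` abstracts the weighted space `L²(D)⁶`, `Φ` the test space `X_h ⊂ H₀¹(D)`,
and `g₁ φ = (∇φ, 0)`, `g₂ φ = (0, ∇φ)` are the gradient pairs, which lie in the dG
space `V_h`; the duality products are `⟨∇·(εE), φ⟩_{-1} = -⟪(E,H), g₁ φ⟫_V` and
`⟨∇·(μH), φ⟩_{-1} = -⟪(E,H), g₂ φ⟫_V`.  If the initial datum is divergence-free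
(`⟪u₀, gᵢ φ⟫ = 0`), the noise increments take values in the divergence-free space
(`⟪ΔW, gᵢ φ⟫ = 0`), `πh` is the `V`-orthogonal projection onto `V_h`, and the dG
operator satisfies `⟪Mh w, gᵢ φ⟫ = 0` for all `w`, then for all `n` and all `φ`,
`⟨∇·(ε E_h^n), φ⟩_{-1} = 0` and `⟨∇·(μ H_h^n), φ⟩_{-1} = 0` almost surely
(pathwise, for every `ω`). -/
theorem stmt_14 {V : Type*} [NormedAddCommGroup V] [InnerProductSpace ℝ V]
    {Φ : Type*} [AddCommGroup Φ] [Module ℝ Φ] {Ω : Type*}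
    (Vh : Submodule ℝ V)
    (g₁ g₂ : Φ →ₗ[ℝ] V)
    (hg₁ : ∀ φ, g₁ φ ∈ Vh) (hg₂ : ∀ φ, g₂ φ ∈ Vh)
    (Mh : V →ₗ[ℝ] V)
    (hM : ∀ w : V, ∀ φ : Φ, ⟪Mh w, g₁ φ⟫ = 0 ∧ ⟪Mh w, g₂ φ⟫ = 0)
    (πh : V →ₗ[ℝ] V) (hπ : ∀ v : V, ∀ w ∈ Vh, ⟪v - πh v, w⟫ = 0)
    (u0 : Ω → V)
    (hu0 : ∀ ω, ∀ φ, ⟪u0 ω, g₁ φ⟫ = 0 ∧ ⟪u0 ω, g₂ φ⟫ = 0)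
    (ΔW : ℕ → Ω → V)
    (hΔW : ∀ n ω φ, ⟪ΔW n ω, g₁ φ⟫ = 0 ∧ ⟪ΔW n ω, g₂ φ⟫ = 0)
    (τ : ℝ) (uh : ℕ → Ω → V)
    (h0 : ∀ ω, uh 0 ω = πh (u0 ω))
    (hrec : ∀ n ω, uh (n + 1) ω = uh n ω
        + (τ / 2) • (Mh (uh n ω) + Mh (uh (n + 1) ω)) - πh (ΔW (n + 1) ω)) :
    ∀ n ω φ, (-⟪uh n ω, g₁ φ⟫ = 0) ∧ (-⟪uh n ω, g₂ φ⟫ = 0) := by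
  have hπ' : ∀ (v : V) (w : V), w ∈ Vh → ⟪πh v, w⟫ = ⟪v, w⟫ := by
    intro v w hw
    have := hπ v w hw
    rw [inner_sub_left] at this
    linarith
  intro n
  induction n with
  | zero =>
    intro ω φ
    rw [h0 ω]
    constructor
    · rw [hπ' _ _ (hg₁ φ), (hu0 ω φ).1, neg_zero]
    · rw [hπ' _ _ (hg₂ φ), (hu0 ω φ).2, neg_zero]
  | succ n ih =>
    intro ω φ
    have h1 := (ih ω φ).1
    have h2 := (ih ω φ).2
    rw [hrec n ω]
    constructor
    · rw [inner_sub_left, inner_add_left, inner_smul_left, inner_add_left,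
        (hM (uh n ω) φ).1, (hM (uh (n+1) ω) φ).1, hπ' _ _ (hg₁ φ), (hΔW (n+1) ω φ).1]
      simp only [neg_eq_zero] at h1 ⊢
      linarith
    · rw [inner_sub_left, inner_add_left, inner_smul_left, inner_add_left,
        (hM (uh n ω) φ).2, (hM (uh (n+1) ω) φ).2, hπ' _ _ (hg₂ φ), (hΔW (n+1) ω φ).2]
      simp only [neg_eq_zero] at h2 ⊢
      linarith
end

section
/- If Q commutes with M and Q^{-1/2}v, Q^{-1/2}u_0 ∈ D(M), then the difference between the continuous rate function I_T^{u0}(v) = (1/(2T))||Q^{-1/2}(v - S(T)u_0)||² and the discrete rate function I_{T,N}^{u0}(v) = (1/(2T))||Q^{-1/2}T_τ^{-1}(v - S_τ^N u_0)||² satisfies |I_T^{u0}(v) - I_{T,N}^{u0}(v)| ≤ Cτ^{1/2}, with C depending on T, ||Q^{-1/2}v||_{D(M)}, ||Q^{-1/2}u_0||_{D(M)}. -/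
set_option maxHeartbeats 2000000


open scoped RealInnerProductSpace

/-- Convergence of the discrete large-deviation rate function.  With `Q` commuting
with `M` and `a = Q^{-1/2} v`, `b = Q^{-1/2} u₀ ∈ D(M)`, the continuous rate function
is `I_T^{u₀}(v) = (1/(2T))‖a - S(T) b‖²` and the discrete one is
`I_{T,N}^{u₀}(v) = (1/(2T))‖Tτ⁻¹ (a - Sτ^N b)‖²` with
`Tτ⁻¹ = I - (τ/2)M`, `τ = T/N`.  Their difference is bounded by `C τ^{1/2}`, with `C`
depending on `T`, `‖Q^{-1/2}v‖_{D(M)}` and `‖Q^{-1/2}u₀‖_{D(M)}` only (in particular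
independent of `τ = T/N` and of the Cayley transform `Sτ`). -/
theorem stmt_19 {V : Type*} [NormedAddCommGroup V] [InnerProductSpace ℝ V]
    (D : Submodule ℝ V) (M : V →ₗ[ℝ] V)
    (hskew : ∀ v ∈ D, ∀ w ∈ D, ⟪M v, w⟫ = - ⟪v, M w⟫)
    (S : ℝ → V →ₗ[ℝ] V)
    (hS0 : S 0 = LinearMap.id)
    (hSgrp : ∀ s t : ℝ, S (s + t) = (S s).comp (S t))
    (hSiso : ∀ t : ℝ, ∀ v : V, ‖S t v‖ = ‖v‖)
    (hSinv : ∀ t : ℝ, ∀ v ∈ D, S t v ∈ D)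
    (hSgen : ∀ v ∈ D, ∀ t : ℝ, HasDerivAt (fun r : ℝ => S r v) (M (S t v)) t)
    (T : ℝ) (hT : 0 < T)
    (a b : V) (ha : a ∈ D) (hb : b ∈ D) :
    ∃ C > 0, ∀ N : ℕ, 0 < N → ∀ Sτ : V →ₗ[ℝ] V,
      (∀ v : V, ‖Sτ v‖ = ‖v‖) →
      (∀ v ∈ D, Sτ v ∈ D ∧
        Sτ v - (T / N / 2) • M (Sτ v) = v + (T / N / 2) • M v ∧
        M (Sτ v) = Sτ (M v)) →
      |1 / (2 * T) * ‖a - S T b‖ ^ 2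
          - 1 / (2 * T) *
            ‖(a - (Sτ ^ N) b) - (T / N / 2) • M (a - (Sτ ^ N) b)‖ ^ 2|
        ≤ C * (T / N) ^ ((1 : ℝ) / 2) := by
  -- generic semigroup facts
  have hshiftD : ∀ v ∈ D, ∀ (c t : ℝ), HasDerivAt (fun s : ℝ => S (c + s) v) (M (S (c + t) v)) t := by
    intro v hv c t
    have h : HasDerivAt (fun r : ℝ => S r v) (M (S (c + t) v)) (c + t) := hSgen v hv (c + t)
    have hshift : HasDerivAt (fun s : ℝ => c + s) 1 t := by
      simpa using (hasDerivAt_id t).const_add c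
    have := HasDerivAt.scomp t h hshift
    simpa [Function.comp_def] using this
  have hcomm : ∀ v ∈ D, ∀ t : ℝ, M (S t v) = S t (M v) := by
    intro v hv t
    have h1 : HasDerivAt (fun s : ℝ => S (t + s) v) (M (S (t + 0) v)) 0 := hshiftD v hv t 0
    rw [add_zero] at h1
    letI L : V →L[ℝ] V := LinearMap.mkContinuous (S t) 1 (fun x => by rw [hSiso]; simp)
    have h0 : HasDerivAt (fun r : ℝ => S r v) (M v) 0 := by
      have := hSgen v hv 0
      rwa [hS0] at this
    have h2 : HasDerivAt (fun s : ℝ => L (S s v)) (L (M v)) 0 :=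
      HasFDerivAt.comp_hasDerivAt 0 L.hasFDerivAt h0
    have heq : (fun s : ℝ => S (t + s) v) = (fun s : ℝ => L (S s v)) := by
      funext s
      have := hSgrp t s
      simp only [L, LinearMap.mkContinuous_apply]
      rw [this]; rfl
    rw [heq] at h1
    have := h1.unique h2
    simpa [L, LinearMap.mkContinuous_apply] using this
  have hlip : ∀ v ∈ D, ∀ s t : ℝ, ‖S t v - S s v‖ ≤ ‖M v‖ * |t - s| := by
    intro v hv s t
    have := Convex.norm_image_sub_le_of_norm_hasDerivWithin_le
      (f := fun r : ℝ => S r v) (f' := fun r : ℝ => M (S r v)) (s := Set.univ) (C := ‖M v‖)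
      (fun x _ => (hSgen v hv x).hasDerivWithinAt)
      (fun x _ => by show ‖M (S x v)‖ ≤ ‖M v‖; rw [hcomm v hv x, hSiso]) convex_univ (Set.mem_univ s) (Set.mem_univ t)
    simpa [Real.norm_eq_abs] using this
  -- constants
  set K : ℝ := ‖b‖ * ‖M b‖ + 3/2 * T * ‖M b‖ ^ 2 with hK
  have hKnn : 0 ≤ K := by
    rw [hK]
    have h1 : (0:ℝ) ≤ 3/2 * T * ‖M b‖ ^ 2 :=
      mul_nonneg (by linarith) (sq_nonneg _)
    have h2 : (0:ℝ) ≤ ‖b‖ * ‖M b‖ := mul_nonneg (norm_nonneg _) (norm_nonneg _)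
    linarith
  set C₁ : ℝ := Real.sqrt (2 * K) + Real.sqrt T / 2 * (‖M a‖ + ‖M b‖) with hC₁
  have hC₁nn : 0 ≤ C₁ := by
    have := Real.sqrt_nonneg (2 * K)
    have h2 := Real.sqrt_nonneg T
    have h3 : (0:ℝ) ≤ ‖M a‖ + ‖M b‖ := by positivity
    rw [hC₁]; nlinarith
  set C₂ : ℝ := 2 * (‖a‖ + ‖b‖) + T / 2 * (‖M a‖ + ‖M b‖) with hC₂
  have hC₂nn : 0 ≤ C₂ := by
    have h3 : (0:ℝ) ≤ ‖M a‖ + ‖M b‖ := by positivity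
    have h4 : (0:ℝ) ≤ ‖a‖ + ‖b‖ := by positivity
    rw [hC₂]; nlinarith
  have h2T : (0:ℝ) < 1 / (2 * T) := by positivity
  refine ⟨1 / (2 * T) * C₂ * C₁ + 1, by
    have := mul_nonneg (mul_nonneg h2T.le hC₂nn) hC₁nn
    linarith, ?_⟩
  intro N hN Sτ hiso hcay
  have hNpos : (0:ℝ) < (N:ℝ) := by exact_mod_cast hN
  set τ : ℝ := T / (N:ℝ) with hτdef
  have hτpos : 0 < τ := by positivity
  have hNτ : (N:ℝ) * τ = T := by rw [hτdef]; field_simp [hNpos.ne']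
  have hτT : τ ≤ T := by
    have h1 : (1:ℝ) ≤ (N:ℝ) := by exact_mod_cast hN
    rw [hτdef, div_le_iff₀ hNpos]
    nlinarith
  -- discrete flow facts
  have hzD : ∀ n : ℕ, (Sτ ^ n) b ∈ D := by
    intro n; induction n with
    | zero => simpa using hb
    | succ n ih =>
      rw [pow_succ', Module.End.mul_apply]
      exact (hcay _ ih).1
  have hzsucc : ∀ n : ℕ, (Sτ ^ (n+1)) b = Sτ ((Sτ ^ n) b) := by
    intro n; rw [pow_succ', Module.End.mul_apply]
  have hMz : ∀ n : ℕ, M ((Sτ ^ n) b) = (Sτ ^ n) (M b) := by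
    intro n; induction n with
    | zero => simp
    | succ n ih =>
      rw [hzsucc, (hcay _ (hzD n)).2.2, ih, pow_succ', Module.End.mul_apply]
  have hisopow : ∀ (n : ℕ) (v : V), ‖(Sτ ^ n) v‖ = ‖v‖ := by
    intro n; induction n with
    | zero => simp
    | succ n ih =>
      intro v
      rw [pow_succ', Module.End.mul_apply, hiso, ih]
  -- Cayley expansion
  have hcay2 : ∀ n : ℕ, (Sτ ^ (n+1)) b =
      (Sτ ^ n) b + (τ/2) • ((Sτ ^ n) (M b) + (Sτ ^ (n+1)) (M b)) := by
    intro n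
    have hc := (hcay _ (hzD n)).2.1
    rw [← hzsucc n] at hc
    rw [hMz n, hMz (n+1)] at hc
    rw [sub_eq_iff_eq_add] at hc
    rw [hc, smul_add]
    abel
  have hdnorm : ∀ n : ℕ, ‖(2:ℝ)⁻¹ • ((Sτ ^ n) (M b) + (Sτ ^ (n+1)) (M b))‖ ≤ ‖M b‖ := by
    intro n
    rw [norm_smul]
    have h1 := norm_add_le ((Sτ ^ n) (M b)) ((Sτ ^ (n+1)) (M b))
    rw [hisopow, hisopow] at h1
    have h2 : ‖(2:ℝ)⁻¹‖ = 2⁻¹ := by norm_num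
    rw [h2]
    nlinarith [norm_nonneg ((Sτ ^ n) (M b) + (Sτ ^ (n+1)) (M b))]
  -- the interpolating function and its derivative
  set F : ℝ → ℝ := fun t => ∑ n ∈ Finset.range N,
      ⟪S ((n:ℝ)*τ + t) b, (Sτ ^ n) b + t • ((2:ℝ)⁻¹ • ((Sτ ^ n) (M b) + (Sτ ^ (n+1)) (M b)))⟫
    with hFdef
  set DF : ℝ → ℝ := fun t => ∑ n ∈ Finset.range N,
      (⟪S ((n:ℝ)*τ + t) b, (2:ℝ)⁻¹ • ((Sτ ^ n) (M b) + (Sτ ^ (n+1)) (M b))⟫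
        + ⟪M (S ((n:ℝ)*τ + t) b), (Sτ ^ n) b + t • ((2:ℝ)⁻¹ • ((Sτ ^ n) (M b) + (Sτ ^ (n+1)) (M b)))⟫)
    with hDdef
  have hFderiv : ∀ t : ℝ, HasDerivAt F (DF t) t := by
    intro t
    rw [hFdef, hDdef]
    apply HasDerivAt.fun_sum
    intro n _
    have h1 := hshiftD b hb ((n:ℝ)*τ) t
    have h2 : HasDerivAt
        (fun s : ℝ => (Sτ ^ n) b + s • ((2:ℝ)⁻¹ • ((Sτ ^ n) (M b) + (Sτ ^ (n+1)) (M b))))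
        ((2:ℝ)⁻¹ • ((Sτ ^ n) (M b) + (Sτ ^ (n+1)) (M b))) t := by
      simpa using ((hasDerivAt_id t).smul_const
        ((2:ℝ)⁻¹ • ((Sτ ^ n) (M b) + (Sτ ^ (n+1)) (M b)))).const_add ((Sτ ^ n) b)
    exact HasDerivAt.inner ℝ h1 h2
  -- bound on the derivative
  have hFbound : ∀ t ∈ Set.Icc (0:ℝ) τ, |DF t| ≤ K := by
    intro t ht
    obtain ⟨ht0, htτ⟩ := ht
    set A : ℝ := ∑ n ∈ Finset.range N,
        (⟪S ((n:ℝ)*τ + t) b, (Sτ ^ (n+1)) (M b)⟫ - ⟪S ((n:ℝ)*τ + t) b, (Sτ ^ n) (M b)⟫)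
      with hAdef
    set R : ℝ := ∑ n ∈ Finset.range N,
        ⟪S ((n:ℝ)*τ + t) (M b), (2:ℝ)⁻¹ • ((Sτ ^ n) (M b) + (Sτ ^ (n+1)) (M b))⟫
      with hRdef
    have hsplit : DF t = 2⁻¹ * A + t * R := by
      rw [hDdef, hAdef, hRdef]
      simp only []
      rw [Finset.mul_sum, Finset.mul_sum, ← Finset.sum_add_distrib]
      refine Finset.sum_congr rfl fun n _ => ?_
      have e1 : ⟪M (S ((n:ℝ)*τ + t) b), (Sτ ^ n) b⟫
          = -⟪S ((n:ℝ)*τ + t) b, (Sτ ^ n) (M b)⟫ := by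
        rw [hskew _ (hSinv _ _ hb) _ (hzD n), hMz n]
      have e2 : M (S ((n:ℝ)*τ + t) b) = S ((n:ℝ)*τ + t) (M b) := hcomm b hb _
      have e3 : ⟪S ((n:ℝ)*τ + t) b, (2:ℝ)⁻¹ • ((Sτ ^ n) (M b) + (Sτ ^ (n+1)) (M b))⟫
          = 2⁻¹ * (⟪S ((n:ℝ)*τ + t) b, (Sτ ^ n) (M b)⟫
              + ⟪S ((n:ℝ)*τ + t) b, (Sτ ^ (n+1)) (M b)⟫) := by
        rw [real_inner_smul_right, inner_add_right]
      rw [e3, inner_add_right, e1, real_inner_smul_right, e2]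
      ring
    -- Abel summation bound for A
    have hA : |A| ≤ 2 * (‖b‖ * ‖M b‖) + T * ‖M b‖ ^ 2 := by
      set P : ℕ → ℝ := fun n => ⟪S ((n:ℝ)*τ + t) b, (Sτ ^ n) (M b)⟫ with hPdef
      set G : ℕ → ℝ := fun n => ⟪S ((n:ℝ)*τ + t) b, (Sτ ^ (n+1)) (M b)⟫ with hGdef
      have hAbel : A = (∑ n ∈ Finset.range N, (G n - P (n+1))) + (P N - P 0) := by
        rw [← Finset.sum_range_sub P N, ← Finset.sum_add_distrib, hAdef]
        refine Finset.sum_congr rfl fun n _ => ?_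
        simp only [hPdef, hGdef]
        ring
      have hterm : ∀ n ∈ Finset.range N, |G n - P (n+1)| ≤ ‖M b‖ * τ * ‖M b‖ := by
        intro n _
        have hGP : G n - P (n+1)
            = ⟪S ((n:ℝ)*τ + t) b - S (((n+1:ℕ):ℝ)*τ + t) b, (Sτ ^ (n+1)) (M b)⟫ := by
          rw [inner_sub_left]
        rw [hGP]
        calc |⟪S ((n:ℝ)*τ + t) b - S (((n+1:ℕ):ℝ)*τ + t) b, (Sτ ^ (n+1)) (M b)⟫|
            ≤ ‖S ((n:ℝ)*τ + t) b - S (((n+1:ℕ):ℝ)*τ + t) b‖ * ‖(Sτ ^ (n+1)) (M b)‖ :=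
              abs_real_inner_le_norm _ _
          _ ≤ (‖M b‖ * τ) * ‖M b‖ := by
              rw [hisopow]
              have hl := hlip b hb (((n+1:ℕ):ℝ)*τ + t) ((n:ℝ)*τ + t)
              have harg : ((n:ℝ)*τ + t) - (((n+1:ℕ):ℝ)*τ + t) = -τ := by push_cast; ring
              rw [harg, abs_neg, abs_of_pos hτpos] at hl
              exact mul_le_mul_of_nonneg_right hl (norm_nonneg _)
          _ = ‖M b‖ * τ * ‖M b‖ := by ring
      have hsum : |∑ n ∈ Finset.range N, (G n - P (n+1))| ≤ (N:ℝ) * (‖M b‖ * τ * ‖M b‖) := by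
        calc |∑ n ∈ Finset.range N, (G n - P (n+1))|
            ≤ ∑ n ∈ Finset.range N, |G n - P (n+1)| := Finset.abs_sum_le_sum_abs _ _
          _ ≤ ∑ _n ∈ Finset.range N, (‖M b‖ * τ * ‖M b‖) := Finset.sum_le_sum hterm
          _ = (N:ℝ) * (‖M b‖ * τ * ‖M b‖) := by
              rw [Finset.sum_const, Finset.card_range, nsmul_eq_mul]
      have hNτ2 : (N:ℝ) * (‖M b‖ * τ * ‖M b‖) = T * ‖M b‖ ^ 2 := by
        rw [← hNτ]; ring
      have hPN : |P N| ≤ ‖b‖ * ‖M b‖ := by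
        calc |P N| ≤ ‖S ((N:ℝ)*τ + t) b‖ * ‖(Sτ ^ N) (M b)‖ := abs_real_inner_le_norm _ _
          _ = ‖b‖ * ‖M b‖ := by rw [hSiso, hisopow]
      have hP0 : |P 0| ≤ ‖b‖ * ‖M b‖ := by
        calc |P 0| ≤ ‖S ((0:ℕ)*τ + t) b‖ * ‖(Sτ ^ 0) (M b)‖ := abs_real_inner_le_norm _ _
          _ = ‖b‖ * ‖M b‖ := by rw [hSiso, hisopow]
      rw [hAbel]
      have := abs_add_le (∑ n ∈ Finset.range N, (G n - P (n+1))) (P N - P 0)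
      have h5 := abs_sub (P N) (P 0)
      have h6 := abs_sub_abs_le_abs_sub (P N) (P 0)
      calc |(∑ n ∈ Finset.range N, (G n - P (n+1))) + (P N - P 0)|
          ≤ |∑ n ∈ Finset.range N, (G n - P (n+1))| + |P N - P 0| := abs_add_le _ _
        _ ≤ (N:ℝ) * (‖M b‖ * τ * ‖M b‖) + (|P N| + |P 0|) := by
            have := abs_sub (P N) (P 0)
            have h7 : |P N - P 0| ≤ |P N| + |P 0| := abs_sub _ _
            linarith
        _ ≤ 2 * (‖b‖ * ‖M b‖) + T * ‖M b‖ ^ 2 := by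
            rw [hNτ2]; linarith
    -- bound for R
    have hR : |R| ≤ (N:ℝ) * ‖M b‖ ^ 2 := by
      calc |R| ≤ ∑ n ∈ Finset.range N,
            |⟪S ((n:ℝ)*τ + t) (M b), (2:ℝ)⁻¹ • ((Sτ ^ n) (M b) + (Sτ ^ (n+1)) (M b))⟫| := by
              rw [hRdef]; exact Finset.abs_sum_le_sum_abs _ _
        _ ≤ ∑ _n ∈ Finset.range N, ‖M b‖ ^ 2 := by
            refine Finset.sum_le_sum fun n _ => ?_
            calc |⟪S ((n:ℝ)*τ + t) (M b), (2:ℝ)⁻¹ • ((Sτ ^ n) (M b) + (Sτ ^ (n+1)) (M b))⟫|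
                ≤ ‖S ((n:ℝ)*τ + t) (M b)‖
                    * ‖(2:ℝ)⁻¹ • ((Sτ ^ n) (M b) + (Sτ ^ (n+1)) (M b))‖ :=
                  abs_real_inner_le_norm _ _
              _ ≤ ‖M b‖ * ‖M b‖ := by
                  rw [hSiso]
                  exact mul_le_mul_of_nonneg_left (hdnorm n) (norm_nonneg _)
              _ = ‖M b‖ ^ 2 := by ring
        _ = (N:ℝ) * ‖M b‖ ^ 2 := by
            rw [Finset.sum_const, Finset.card_range, nsmul_eq_mul]
    rw [hsplit]
    have htR : |t * R| ≤ T * ‖M b‖ ^ 2 := by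
      rw [abs_mul, abs_of_nonneg ht0]
      calc t * |R| ≤ τ * ((N:ℝ) * ‖M b‖ ^ 2) := by
            apply mul_le_mul htτ hR (abs_nonneg _) hτpos.le
        _ = T * ‖M b‖ ^ 2 := by rw [← hNτ]; ring
    calc |2⁻¹ * A + t * R| ≤ |2⁻¹ * A| + |t * R| := abs_add_le _ _
      _ ≤ 2⁻¹ * (2 * (‖b‖ * ‖M b‖) + T * ‖M b‖ ^ 2) + T * ‖M b‖ ^ 2 := by
          rw [abs_mul]
          have : |(2:ℝ)⁻¹| = 2⁻¹ := by norm_num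
          rw [this]
          nlinarith
      _ = K := by rw [hK]; ring
  -- telescoping identity
  set P2 : ℕ → ℝ := fun n => ⟪S ((n:ℝ)*τ) b, (Sτ ^ n) b⟫ with hP2def
  have hF0 : F 0 = ∑ n ∈ Finset.range N, P2 n := by
    rw [hFdef]
    refine Finset.sum_congr rfl fun n _ => ?_
    simp [hP2def]
  have hFτ : F τ = ∑ n ∈ Finset.range N, P2 (n+1) := by
    rw [hFdef]
    refine Finset.sum_congr rfl fun n _ => ?_
    have harg : (n:ℝ)*τ + τ = (((n+1):ℕ):ℝ)*τ := by push_cast; ring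
    rw [smul_smul]
    have h2 : τ * (2:ℝ)⁻¹ = τ/2 := by ring
    rw [h2, ← hcay2 n, harg]
  have hmvt : |F τ - F 0| ≤ K * τ := by
    have h := Convex.norm_image_sub_le_of_norm_hasDerivWithin_le
      (f := F) (f' := DF) (s := Set.Icc 0 τ) (C := K)
      (fun x _ => (hFderiv x).hasDerivWithinAt)
      (fun x hx => by rw [Real.norm_eq_abs]; exact hFbound x hx)
      (convex_Icc 0 τ) (Set.left_mem_Icc.mpr hτpos.le) (Set.right_mem_Icc.mpr hτpos.le)
    rw [Real.norm_eq_abs, Real.norm_eq_abs, sub_zero, abs_of_pos hτpos] at h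
    exact h
  have htel : F τ - F 0 = P2 N - P2 0 := by
    rw [hFτ, hF0, ← Finset.sum_sub_distrib, Finset.sum_range_sub]
  have hP20 : P2 0 = ‖b‖ ^ 2 := by
    simp [hP2def, hS0, real_inner_self_eq_norm_sq]
  have hP2N : P2 N = ⟪S T b, (Sτ ^ N) b⟫ := by
    simp only [hP2def, hNτ]
  have herr2 : ‖S T b - (Sτ ^ N) b‖ ^ 2 ≤ 2 * K * τ := by
    rw [norm_sub_sq_real, hSiso, hisopow]
    have habs2 := abs_le.mp hmvt
    rw [htel, hP20, hP2N] at habs2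
    nlinarith [habs2.1]
  have herr : ‖S T b - (Sτ ^ N) b‖ ≤ Real.sqrt (2*K) * Real.sqrt τ := by
    have h1 : ‖S T b - (Sτ ^ N) b‖ = Real.sqrt (‖S T b - (Sτ ^ N) b‖ ^ 2) :=
      (Real.sqrt_sq (norm_nonneg _)).symm
    rw [h1, ← Real.sqrt_mul (by linarith : (0:ℝ) ≤ 2*K) τ]
    exact Real.sqrt_le_sqrt herr2
  -- final assembly
  have hMdiff : M (a - (Sτ ^ N) b) = M a - (Sτ ^ N) (M b) := by
    rw [map_sub, hMz]
  set x := a - S T b with hxdef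
  set y := (a - (Sτ ^ N) b) - (τ/2) • M (a - (Sτ ^ N) b) with hydef
  have hxysub : ‖x - y‖ ≤ C₁ * Real.sqrt τ := by
    have hxy : x - y = ((Sτ ^ N) b - S T b) + (τ/2) • (M a - (Sτ ^ N) (M b)) := by
      rw [hxdef, hydef, hMdiff]; module
    rw [hxy]
    have h1 : ‖(Sτ ^ N) b - S T b‖ ≤ Real.sqrt (2*K) * Real.sqrt τ := by
      rw [norm_sub_rev]; exact herr
    have h2 : ‖(τ/2) • (M a - (Sτ ^ N) (M b))‖ ≤ τ/2 * (‖M a‖ + ‖M b‖) := by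
      rw [norm_smul, Real.norm_eq_abs, abs_of_pos (by linarith : (0:ℝ) < τ/2)]
      have h2a := norm_sub_le (M a) ((Sτ ^ N) (M b))
      rw [hisopow] at h2a
      nlinarith
    have h3 : τ ≤ Real.sqrt T * Real.sqrt τ := by
      nth_rewrite 1 [← Real.mul_self_sqrt hτpos.le]
      exact mul_le_mul_of_nonneg_right (Real.sqrt_le_sqrt hτT) (Real.sqrt_nonneg τ)
    have h4 := norm_add_le ((Sτ ^ N) b - S T b) ((τ/2) • (M a - (Sτ ^ N) (M b)))
    have h5 : (0:ℝ) ≤ ‖M a‖ + ‖M b‖ := by positivity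
    have h6 := mul_le_mul_of_nonneg_right h3 (by positivity : (0:ℝ) ≤ (‖M a‖ + ‖M b‖)/2)
    rw [hC₁]
    nlinarith [Real.sqrt_nonneg τ]
  have hxyadd : ‖x + y‖ ≤ C₂ := by
    have h1 : ‖x‖ ≤ ‖a‖ + ‖b‖ := by
      rw [hxdef]
      have h1a := norm_sub_le a (S T b)
      rw [hSiso] at h1a; exact h1a
    have h2 : ‖y‖ ≤ (‖a‖ + ‖b‖) + τ/2 * (‖M a‖ + ‖M b‖) := by
      rw [hydef]
      have h3 := norm_sub_le (a - (Sτ ^ N) b) ((τ/2) • M (a - (Sτ ^ N) b))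
      have h4 : ‖a - (Sτ ^ N) b‖ ≤ ‖a‖ + ‖b‖ := by
        have h4a := norm_sub_le a ((Sτ ^ N) b)
        rw [hisopow] at h4a; exact h4a
      have h5 : ‖(τ/2) • M (a - (Sτ ^ N) b)‖ ≤ τ/2 * (‖M a‖ + ‖M b‖) := by
        rw [hMdiff, norm_smul, Real.norm_eq_abs, abs_of_pos (by linarith : (0:ℝ) < τ/2)]
        have h5a := norm_sub_le (M a) ((Sτ ^ N) (M b))
        rw [hisopow] at h5a
        nlinarith
      linarith
    have h6 : τ/2 * (‖M a‖ + ‖M b‖) ≤ T/2 * (‖M a‖ + ‖M b‖) := by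
      have h7 : (0:ℝ) ≤ ‖M a‖ + ‖M b‖ := by positivity
      nlinarith
    have h8 := norm_add_le x y
    rw [hC₂]; linarith
  have hid : ∀ p q : V, ‖p‖ ^ 2 - ‖q‖ ^ 2 = ⟪p + q, p - q⟫ := by
    intro p q
    rw [inner_add_left, inner_sub_right, inner_sub_right,
      real_inner_self_eq_norm_sq, real_inner_self_eq_norm_sq, real_inner_comm q p]
    ring
  have habs : |‖x‖ ^ 2 - ‖y‖ ^ 2| ≤ ‖x + y‖ * ‖x - y‖ := by
    rw [hid x y]; exact abs_real_inner_le_norm _ _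
  rw [← mul_sub, abs_mul, abs_of_pos h2T]
  calc 1/(2*T) * |‖x‖^2 - ‖y‖^2|
      ≤ 1/(2*T) * (‖x+y‖ * ‖x-y‖) := mul_le_mul_of_nonneg_left habs h2T.le
    _ ≤ 1/(2*T) * (C₂ * (C₁ * Real.sqrt τ)) := by
        apply mul_le_mul_of_nonneg_left _ h2T.le
        exact mul_le_mul hxyadd hxysub (norm_nonneg _) hC₂nn
    _ = (1/(2*T) * C₂ * C₁) * Real.sqrt τ := by ring
    _ ≤ (1/(2*T) * C₂ * C₁ + 1) * Real.sqrt τ := by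
        apply mul_le_mul_of_nonneg_right _ (Real.sqrt_nonneg τ)
        linarith
    _ = (1/(2*T) * C₂ * C₁ + 1) * τ ^ ((1:ℝ)/2) := by
        rw [Real.sqrt_eq_rpow]
end
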